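/- arXiv:2501.17255 — 4 statements merged into one kernel-verified Lean document; each statement's English description precedes it below -/
import Mathlib

section
/- Let (G,E_f,MP^f) be a 1-fair mean-payoff game and q0 a node whose optimal value is v, i.e., v is the supremum (attained) of thresholds u such that q0 ∈ Win_1 of the 1-fair mean-payoff game with objective MP_u^f. Then for every ε > 0 there exists a finite-memory player-1 strategy that is winning from q0 in the 1-fair mean-payoff game with objective MP_{v-ε}^f. -/
/-!
Common framework: weighted game arenas, plays, strategies, mean-payoff and
energy objectives, strong transition fairness.
-/

open Filter

/-- A two-player weighted game arena: `p1` is the set of player-1 nodes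
(player-2 nodes are the complement), `edge` the edge relation, `w` the integer
weight function, and every node has at least one outgoing edge. -/
structure Arena (Q : Type) where
  p1 : Set Q
  edge : Q → Q → Prop
  w : Q → Q → ℤ
  succ_exists : ∀ q, ∃ q', edge q q'

variable {Q : Type}

/-- A strategy: to every history `H` (the sequence of previously visited nodes)
and current node `q`, it assigns an edge-successor of `q`.  (It is only ever
consulted at the nodes of the corresponding player.) -/
def Strategy (A : Arena Q) : Type :=
  { f : List Q → Q → Q // ∀ H q, A.edge q (f H q) }

open Classical in
/-- Auxiliary: the history (list of earlier nodes) and the current node after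
`n` steps of the play from `q` in which player 1 uses `σ` and player 2 uses `π`. -/
noncomputable def hist (A : Arena Q) (σ π : Strategy A) (q : Q) : ℕ → List Q × Q
  | 0 => ([], q)
  | n + 1 =>
    let p := hist A σ π q n
    (p.1 ++ [p.2], if p.2 ∈ A.p1 then σ.1 p.1 p.2 else π.1 p.1 p.2)

/-- `play A σ π q` is the unique play from `q` conforming with the player-1
strategy `σ` and the player-2 strategy `π`. -/
noncomputable def play (A : Arena Q) (σ π : Strategy A) (q : Q) (n : ℕ) : Q :=
  (hist A σ π q n).2

/-- Weight `w(τ[0;i])` of the prefix of length `i` of the play `τ`. -/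
def prefWeight (A : Arena Q) (τ : ℕ → Q) (i : ℕ) : ℤ :=
  ∑ j ∈ Finset.range i, A.w (τ j) (τ (j + 1))

/-- `avg(τ) = liminf_{i→∞} w(τ[0;i])/i`. -/
noncomputable def mpAvg (A : Arena Q) (τ : ℕ → Q) : ℝ :=
  Filter.liminf (fun i : ℕ => (prefWeight A τ i : ℝ) / (i : ℝ)) Filter.atTop

/-- A play `τ` is fair (w.r.t. the fair edges `Ef`) if every fair edge whose
source node occurs infinitely often in `τ` is itself taken infinitely often. -/
def FairPlay (Ef : Q → Q → Prop) (τ : ℕ → Q) : Prop :=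
  ∀ q q', Ef q q' → (∀ N, ∃ i ≥ N, τ i = q) →
    (∀ N, ∃ i ≥ N, τ i = q ∧ τ (i + 1) = q')

/-- A strategy is memoryless (positional) if its choice depends only on the
current node. -/
def Memoryless (A : Arena Q) (σ : Strategy A) : Prop :=
  ∀ H₁ H₂ q, σ.1 H₁ q = σ.1 H₂ q

/-- A strategy is finite-memory if it is implemented by a memory structure
`(M, m0, α, β)` with `M` finite: the choice after history `H` at node `q` is
`β (α̂ m0 H) q`, where `α̂` iterates the update function `α` along `H`. -/
def FiniteMemory (A : Arena Q) (σ : Strategy A) : Prop :=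
  ∃ (M : Type) (_ : Finite M) (m0 : M) (α : M → Q → M) (β : M → Q → Q),
    ∀ H q, σ.1 H q = β (H.foldl α m0) q

/-- Energy objective with initial credit `c`: every prefix weight stays ≥ `-c`. -/
def EnObj (A : Arena Q) (c : ℕ) (τ : ℕ → Q) : Prop :=
  ∀ i : ℕ, 0 ≤ (c : ℤ) + prefWeight A τ i

/-- Player-1 winning region for an abstract objective. -/
def Win1 (A : Arena Q) (Obj : (ℕ → Q) → Prop) (q : Q) : Prop :=
  ∃ σ : Strategy A, ∀ π : Strategy A, Obj (play A σ π q)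

/-- Player-2 winning region for an abstract objective. -/
def Win2 (A : Arena Q) (Obj : (ℕ → Q) → Prop) (q : Q) : Prop :=
  ∃ π : Strategy A, ∀ σ : Strategy A, ¬ Obj (play A σ π q)

/-- The `i`-fair mean-payoff objective `MP_v^f` (for player 1), where `i = true`
means the arena is 1-fair and `i = false` means it is 2-fair:
`MP_v ∩ {fair plays}` in the 1-fair case and `MP_v ∪ {non-fair plays}` in the
2-fair case. -/
def MPfObj (A : Arena Q) (Ef : Q → Q → Prop) (v : ℝ) (i : Bool) (τ : ℕ → Q) : Prop :=
  if i then (v ≤ mpAvg A τ ∧ FairPlay Ef τ)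
  else (v ≤ mpAvg A τ ∨ ¬ FairPlay Ef τ)

/-- Player-1 winning region of a 1-fair energy game with unknown initial credit. -/
def Win1En1f (A : Arena Q) (Ef : Q → Q → Prop) (q : Q) : Prop :=
  ∃ c : ℕ, ∃ σ : Strategy A, ∀ π : Strategy A,
    EnObj A c (play A σ π q) ∧ FairPlay Ef (play A σ π q)

/-- Player-2 winning region of a 1-fair energy game with unknown initial credit. -/
def Win2En1f (A : Arena Q) (Ef : Q → Q → Prop) (q : Q) : Prop :=
  ∃ π : Strategy A, ∀ c : ℕ, ∀ σ : Strategy A,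
    ¬ (EnObj A c (play A σ π q) ∧ FairPlay Ef (play A σ π q))

/-- Player-1 winning region of a 2-fair energy game with unknown initial credit. -/
def Win1En2f (A : Arena Q) (Ef : Q → Q → Prop) (q : Q) : Prop :=
  ∃ c : ℕ, ∃ σ : Strategy A, ∀ π : Strategy A,
    EnObj A c (play A σ π q) ∨ ¬ FairPlay Ef (play A σ π q)

/-- Player-2 winning region of a 2-fair energy game with unknown initial credit. -/
def Win2En2f (A : Arena Q) (Ef : Q → Q → Prop) (q : Q) : Prop :=
  ∃ π : Strategy A, ∀ c : ℕ, ∀ σ : Strategy A,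
    ¬ (EnObj A c (play A σ π q) ∨ ¬ FairPlay Ef (play A σ π q))

/-- Player-1 winning region of an ordinary (non-fair) energy game with unknown
initial credit. -/
def Win1En (A : Arena Q) (q : Q) : Prop :=
  ∃ c : ℕ, ∃ σ : Strategy A, ∀ π : Strategy A, EnObj A c (play A σ π q)

/-- Player-2 winning region of an ordinary (non-fair) energy game with unknown
initial credit. -/
def Win2En (A : Arena Q) (q : Q) : Prop :=
  ∃ π : Strategy A, ∀ c : ℕ, ∀ σ : Strategy A, ¬ EnObj A c (play A σ π q)
namespace MPF
open Filter

variable {Q : Type}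

/-! ### List helpers -/

theorem getD_take' {l : List Q} {k i : ℕ} (h : i < k) (d : Q) :
    (l.take k).getD i d = l.getD i d := by
  by_cases hi : i < l.length
  · have h1 : i < (l.take k).length := by simp [List.length_take]; omega
    rw [List.getD_eq_getElem _ _ h1, List.getD_eq_getElem _ _ hi, List.getElem_take]
  · have h2 : (l.take k).length ≤ i := by simp [List.length_take]; omega
    rw [List.getD_eq_default _ _ h2, List.getD_eq_default _ _ (by omega)]

theorem getD_append_left' {l l' : List Q} {i : ℕ} (h : i < l.length) (d : Q) :
    (l ++ l').getD i d = l.getD i d := by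
  have h1 : i < (l ++ l').length := by simp; omega
  rw [List.getD_eq_getElem _ _ h1, List.getD_eq_getElem _ _ h,
    List.getElem_append_left h]

theorem getD_concat_self (l : List Q) (x : Q) (d : Q) :
    (l ++ [x]).getD l.length d = x := by
  have h1 : l.length < (l ++ [x]).length := by simp
  rw [List.getD_eq_getElem _ _ h1, List.getElem_concat_length]
  rfl

theorem getD_prefix {l l' : List Q} (h : l <+: l') {i : ℕ} (hi : i < l.length) (d : Q) :
    l'.getD i d = l.getD i d := by
  have h2 : i < l'.length := lt_of_lt_of_le hi h.length_le
  rw [List.getD_eq_getElem _ _ h2, List.getD_eq_getElem _ _ hi, h.getElem hi]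

theorem take_one_eq (l : List Q) (hl : l ≠ []) (d : Q) : l.take 1 = [l.getD 0 d] := by
  cases l with
  | nil => simp at hl
  | cons a t => simp [List.getD]

theorem take_succ_getD (l : List Q) {i : ℕ} (hi : i < l.length) (d : Q) :
    l.take (i+1) = l.take i ++ [l.getD i d] := by
  rw [List.take_succ, List.getD_eq_getElem _ _ hi]
  simp [List.getElem?_eq_getElem hi]

theorem prefix_take_eq {l l' : List Q} (h : l <+: l') {k : ℕ} (hk : k ≤ l.length) :
    l'.take k = l.take k := by
  obtain ⟨t, rfl⟩ := h
  rw [List.take_append]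
  have : k - l.length = 0 := by omega
  simp [this]

theorem prefix_eq_take {l l' : List Q} (h : l <+: l') : l = l'.take l.length := by
  obtain ⟨t, rfl⟩ := h
  simp

/-! ### Weight of a list -/

/-- Sum of edge weights along a list of nodes. -/
def lW (A : Arena Q) (q0 : Q) (l : List Q) : ℤ :=
  ∑ i ∈ Finset.range (l.length - 1), A.w (l.getD i q0) (l.getD (i+1) q0)

theorem lW_concat (A : Arena Q) (q0 : Q) {l : List Q} (hl : l ≠ []) (x : Q) :
    lW A q0 (l ++ [x]) = lW A q0 l + A.w (l.getD (l.length - 1) q0) x := by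
  have h1 : 1 ≤ l.length := List.length_pos_iff.mpr hl
  have h2 : (l ++ [x]).length - 1 = (l.length - 1) + 1 := by simp; omega
  rw [lW, h2, Finset.sum_range_succ]
  congr 1
  · rw [lW]
    apply Finset.sum_congr rfl
    intro i hi
    simp only [Finset.mem_range] at hi
    rw [getD_append_left' (by omega), getD_append_left' (by omega)]
  · rw [getD_append_left' (by omega)]
    have h3 : l.length - 1 + 1 = l.length := by omega
    rw [h3, getD_concat_self]

theorem getD_map_range (τ : ℕ → Q) {n i : ℕ} (h : i < n) (d : Q) :
    ((List.range n).map τ).getD i d = τ i := by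
  have h1 : i < ((List.range n).map τ).length := by simp [h]
  rw [List.getD_eq_getElem _ _ h1]
  simp

theorem lW_map_range (A : Arena Q) (q0 : Q) (τ : ℕ → Q) (n : ℕ) :
    lW A q0 ((List.range (n+1)).map τ) = prefWeight A τ n := by
  rw [lW, prefWeight]
  have h1 : ((List.range (n+1)).map τ).length - 1 = n := by simp
  rw [h1]
  apply Finset.sum_congr rfl
  intro i hi
  simp only [Finset.mem_range] at hi
  rw [getD_map_range τ (by omega), getD_map_range τ (by omega)]

theorem lW_ge (A : Arena Q) (q0 : Q) (W : ℕ) (hW : ∀ a b : Q, -(W:ℤ) ≤ A.w a b)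
    (l : List Q) : -((W:ℤ) * l.length) ≤ lW A q0 l := by
  have h1 : -((W:ℤ) * (l.length - 1 : ℕ)) ≤ lW A q0 l := by
    rw [lW]
    calc -((W:ℤ) * (l.length - 1 : ℕ))
        = ∑ _i ∈ Finset.range (l.length - 1), -(W:ℤ) := by
          rw [Finset.sum_const, Finset.card_range]; push_cast; ring
      _ ≤ _ := Finset.sum_le_sum fun i _ => hW _ _
  refine le_trans ?_ h1
  have : ((l.length - 1 : ℕ) : ℤ) ≤ (l.length : ℤ) := by
    have := Nat.sub_le l.length 1; exact_mod_cast this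
  nlinarith [Int.ofNat_nonneg W]

end MPF
namespace MPF
variable {Q : Type}

/-! ### Consistent histories, good cycles -/

/-- All fair edges out of nodes occurring in `h[i..last)` are taken inside that window. -/
def FairCyc (Ef : Q → Q → Prop) (q0 : Q) (h : List Q) (i : ℕ) : Prop :=
  ∀ t, i ≤ t → t + 1 < h.length → ∀ x', Ef (h.getD t q0) x' →
    ∃ s, i ≤ s ∧ s + 1 < h.length ∧ h.getD s q0 = h.getD t q0 ∧ h.getD (s+1) q0 = x'

/-- `h` closes a good cycle starting at position `i`: same node at `i` and at the end,
average weight at least `c`, and locally fair. -/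
def Good (A : Arena Q) (Ef : Q → Q → Prop) (q0 : Q) (c : ℝ) (h : List Q) (i : ℕ) : Prop :=
  i + 1 < h.length ∧ h.getD i q0 = h.getD (h.length - 1) q0 ∧
  c * (((h.length - 1 : ℕ) : ℝ) - (i : ℝ)) ≤ ((lW A q0 h - lW A q0 (h.take (i+1)) : ℤ) : ℝ) ∧
  FairCyc Ef q0 h i

def Edges (A : Arena Q) (q0 : Q) (h : List Q) : Prop :=
  ∀ t, t + 1 < h.length → A.edge (h.getD t q0) (h.getD (t+1) q0)

/-- self-consistency with σ: player-1 moves in `h` follow `σ` on the stored past. -/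
def SSC (A : Arena Q) (σ : Strategy A) (q0 : Q) (h : List Q) : Prop :=
  ∀ t, t + 1 < h.length → h.getD t q0 ∈ A.p1 →
    h.getD (t+1) q0 = σ.1 (h.take t) (h.getD t q0)

def Nice (A : Arena Q) (σ : Strategy A) (q0 : Q) (h : List Q) : Prop :=
  h.getD 0 q0 = q0 ∧ Edges A q0 h ∧ SSC A σ q0 h

def PairFree (A : Arena Q) (Ef : Q → Q → Prop) (q0 : Q) (c : ℝ) (h : List Q) : Prop :=
  ∀ k i, ¬ Good A Ef q0 c (h.take k) i

section Closure
variable {A : Arena Q} {Ef : Q → Q → Prop} {σ : Strategy A} {q0 : Q} {c : ℝ}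

theorem Edges_take {h : List Q} (hE : Edges A q0 h) (k : ℕ) : Edges A q0 (h.take k) := by
  intro t ht
  have hk : t + 1 < k := by simp [List.length_take] at ht; omega
  have hl : t + 1 < h.length := by simp [List.length_take] at ht; omega
  rw [getD_take' (by omega), getD_take' hk]
  exact hE t hl

theorem SSC_take {h : List Q} (hS : SSC A σ q0 h) (k : ℕ) : SSC A σ q0 (h.take k) := by
  intro t ht
  have hk : t + 1 < k := by simp [List.length_take] at ht; omega
  have hl : t + 1 < h.length := by simp [List.length_take] at ht; omega
  rw [getD_take' (by omega), getD_take' hk, List.take_take,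
    min_eq_left (by omega : t ≤ k)]
  exact hS t hl

theorem Nice_take {h : List Q} (hN : Nice A σ q0 h) (k : ℕ) : Nice A σ q0 (h.take k) := by
  refine ⟨?_, Edges_take hN.2.1 k, SSC_take hN.2.2 k⟩
  rcases Nat.eq_zero_or_pos k with hk | hk
  · subst hk; simp [List.getD]
  · rw [getD_take' hk]; exact hN.1

theorem Nice_prefix {l h : List Q} (hp : l <+: h) (hN : Nice A σ q0 h) : Nice A σ q0 l := by
  rw [prefix_eq_take hp]; exact Nice_take hN _

theorem PairFree_take {h : List Q} (hP : PairFree A Ef q0 c h) (k : ℕ) :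
    PairFree A Ef q0 c (h.take k) := by
  intro k' i
  rw [List.take_take]
  exact hP _ i

theorem PairFree_prefix {l h : List Q} (hp : l <+: h) (hP : PairFree A Ef q0 c h) :
    PairFree A Ef q0 c l := by
  rw [prefix_eq_take hp]; exact PairFree_take hP _

/-- Extending a nice history by a legal move keeps it nice. -/
theorem Nice_concat {h : List Q} (hN : Nice A σ q0 h) (hh : h ≠ []) {x : Q}
    (he : A.edge (h.getD (h.length - 1) q0) x)
    (hs : h.getD (h.length - 1) q0 ∈ A.p1 → x = σ.1 h.dropLast (h.getD (h.length - 1) q0)) :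
    Nice A σ q0 (h ++ [x]) := by
  have h1 : 1 ≤ h.length := List.length_pos_iff.mpr hh
  have hlen : (h ++ [x]).length = h.length + 1 := by simp
  refine ⟨?_, ?_, ?_⟩
  · rw [getD_append_left' (by omega)]; exact hN.1
  · intro t ht
    rw [hlen] at ht
    rcases Nat.lt_or_ge (t+1) h.length with h2 | h2
    · rw [getD_append_left' (by omega), getD_append_left' h2]
      exact hN.2.1 t h2
    · have h3 : t = h.length - 1 := by omega
      have h4 : t + 1 = h.length := by omega
      rw [getD_append_left' (by omega), h4, getD_concat_self, h3]
      exact he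
  · intro t ht hp1
    rw [hlen] at ht
    have htl : t < h.length := by omega
    have htake : (h ++ [x]).take t = h.take t := by
      rw [List.take_append]
      have h0 : t - h.length = 0 := by omega
      simp [h0]
    rw [getD_append_left' htl] at hp1
    rw [getD_append_left' htl, htake]
    rcases Nat.lt_or_ge (t+1) h.length with h2 | h2
    · rw [getD_append_left' h2]
      exact hN.2.2 t h2 hp1
    · have h3 : t = h.length - 1 := by omega
      have h4 : t + 1 = h.length := by omega
      rw [h4, getD_concat_self, h3, ← List.dropLast_eq_take]
      exact hs (h3 ▸ hp1)

end Closure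
end MPF
namespace MPF
variable {Q : Type}

section Machine
variable (A : Arena Q) (Ef : Q → Q → Prop) (σ : Strategy A) (q0 : Q) (c : ℝ)

open Classical in
/-- Truncate a history at the first good cycle (if any). -/
noncomputable def cut (h : List Q) : List Q :=
  if hp : ∃ i, Good A Ef q0 c h i then h.take (hp.choose + 1) else h

variable {A Ef q0 c}

theorem cut_of_neg {h : List Q} (hn : ¬ ∃ i, Good A Ef q0 c h i) :
    cut A Ef q0 c h = h := dif_neg hn

theorem cut_of_pos {h : List Q} (hp : ∃ i, Good A Ef q0 c h i) :
    cut A Ef q0 c h = h.take (hp.choose + 1) := dif_pos hp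

theorem cut_prefix (h : List Q) : cut A Ef q0 c h <+: h := by
  rw [cut]; split
  · exact List.take_prefix _ _
  · exact List.prefix_refl _

theorem cut_length_le (h : List Q) : (cut A Ef q0 c h).length ≤ h.length :=
  (cut_prefix h).length_le

theorem cut_ne_nil {h : List Q} (hh : h ≠ []) : cut A Ef q0 c h ≠ [] := by
  rw [cut]; split
  · have : 1 ≤ h.length := List.length_pos_iff.mpr hh
    simp only [← List.length_pos_iff, List.length_take]
    omega
  · exact hh

theorem cut_last {h : List Q} (hh : h ≠ []) :
    (cut A Ef q0 c h).getD ((cut A Ef q0 c h).length - 1) q0 = h.getD (h.length - 1) q0 := by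
  rw [cut]; split
  · next hp =>
    have hG := hp.choose_spec
    have h1 : hp.choose + 1 ≤ h.length := le_of_lt hG.1
    have h2 : (h.take (hp.choose + 1)).length = hp.choose + 1 := by
      simp [List.length_take]; omega
    rw [h2]
    simp only [Nat.add_sub_cancel]
    rw [getD_take' (by omega)]
    exact hG.2.1
  · rfl

theorem cut_length_pos_eq {h : List Q} (hp : ∃ i, Good A Ef q0 c h i) :
    (cut A Ef q0 c h).length = hp.choose + 1 := by
  rw [cut_of_pos hp]
  have := hp.choose_spec.1
  simp [List.length_take]; omega

variable (A Ef q0 c)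

/-- The memory update: append the new node, cut at a good cycle, and clamp
(the clamp is never triggered on real runs). -/
noncomputable def upd (K : ℕ) (m : List Q) (x : Q) : List Q :=
  if (cut A Ef q0 c (m ++ [x])).length ≤ K + 1 then cut A Ef q0 c (m ++ [x]) else []

/-- Memory computed from a history. -/
noncomputable def mem (K : ℕ) (H : List Q) : List Q := H.foldl (upd A Ef q0 c K) []

/-- The finite-memory strategy induced by `σ` and the cutting rule. -/
noncomputable def sig' (K : ℕ) : Strategy A :=
  ⟨fun H x => σ.1 ((upd A Ef q0 c K (mem A Ef q0 c K H) x).dropLast) x,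
   fun H x => σ.2 _ x⟩

variable {A Ef q0 c}

theorem upd_length_le (K : ℕ) (m : List Q) (x : Q) :
    (upd A Ef q0 c K m x).length ≤ K + 1 := by
  rw [upd]; split
  · assumption
  · simp

theorem upd_eq_cut {K : ℕ} {m : List Q} {x : Q}
    (h : (cut A Ef q0 c (m ++ [x])).length ≤ K + 1) :
    upd A Ef q0 c K m x = cut A Ef q0 c (m ++ [x]) := if_pos h

theorem mem_append (K : ℕ) (H : List Q) (x : Q) :
    mem A Ef q0 c K (H ++ [x]) = upd A Ef q0 c K (mem A Ef q0 c K H) x := by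
  rw [mem, mem, List.foldl_append]; rfl

theorem sig'_finiteMemory [Finite Q] (K : ℕ) : FiniteMemory A (sig' A Ef σ q0 c K) := by
  classical
  refine ⟨{l : List Q // l.length ≤ K + 1}, ?_, ⟨[], by simp⟩,
    fun m x => ⟨upd A Ef q0 c K m.1 x, upd_length_le K m.1 x⟩,
    fun m x => σ.1 ((upd A Ef q0 c K m.1 x).dropLast) x, ?_⟩
  · have : Finite {l : List Q | l.length ≤ K + 1} := (List.finite_length_le Q (K+1)).to_subtype
    exact this
  · intro H x
    have key : ∀ (L : List Q) (m : {l : List Q // l.length ≤ K + 1}),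
        (L.foldl (fun m x => (⟨upd A Ef q0 c K m.1 x, upd_length_le K m.1 x⟩ :
          {l : List Q // l.length ≤ K + 1})) m).1 = L.foldl (upd A Ef q0 c K) m.1 := by
      intro L
      induction L with
      | nil => intro m; rfl
      | cons a t ih => intro m; simp only [List.foldl_cons]; exact ih _
    exact congrArg (fun l => σ.1 ((upd A Ef q0 c K l x).dropLast) x)
      (key H ⟨[], by simp⟩).symm

end Machine

/-! ### Unfolding the play -/

section Hist
variable (A : Arena Q) (σ π : Strategy A) (q : Q)

theorem hist_fst (n : ℕ) :
    (hist A σ π q n).1 = (List.range n).map (fun i => play A σ π q i) := by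
  induction n with
  | zero => simp [hist]
  | succ n ih =>
    have : (hist A σ π q (n+1)).1 = (hist A σ π q n).1 ++ [(hist A σ π q n).2] := rfl
    rw [this, ih, List.range_succ]
    simp [play]

theorem play_zero : play A σ π q 0 = q := rfl

open Classical in
theorem play_succ_mem {n : ℕ} (h : play A σ π q n ∈ A.p1) :
    play A σ π q (n+1) = σ.1 (hist A σ π q n).1 (play A σ π q n) := by
  show (hist A σ π q (n+1)).2 = _
  have : hist A σ π q (n+1) = ((hist A σ π q n).1 ++ [(hist A σ π q n).2],
      if (hist A σ π q n).2 ∈ A.p1 then σ.1 (hist A σ π q n).1 (hist A σ π q n).2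
      else π.1 (hist A σ π q n).1 (hist A σ π q n).2) := rfl
  rw [this]
  exact if_pos h

open Classical in
theorem play_succ_notMem {n : ℕ} (h : play A σ π q n ∉ A.p1) :
    play A σ π q (n+1) = π.1 (hist A σ π q n).1 (play A σ π q n) := by
  show (hist A σ π q (n+1)).2 = _
  have : hist A σ π q (n+1) = ((hist A σ π q n).1 ++ [(hist A σ π q n).2],
      if (hist A σ π q n).2 ∈ A.p1 then σ.1 (hist A σ π q n).1 (hist A σ π q n).2
      else π.1 (hist A σ π q n).1 (hist A σ π q n).2) := rfl
  rw [this]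
  exact if_neg h

end Hist
end MPF
namespace MPF
open Filter
variable {Q : Type}

/-! ### Pigeonhole helpers -/

/-- Eventually, every visited node is visited infinitely often. -/
theorem eventually_infOcc [Fintype Q] (τ : ℕ → Q) :
    ∃ N0, ∀ n ≥ N0, ∀ N, ∃ m ≥ N, τ m = τ n := by
  classical
  set g : Q → ℕ := fun x => if h : ∃ N, ∀ n ≥ N, τ n ≠ x then h.choose else 0 with hg
  refine ⟨Finset.univ.sup g, fun n hn N => ?_⟩
  by_contra hcon
  push_neg at hcon
  have hex : ∃ N', ∀ m ≥ N', τ m ≠ τ n := by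
    refine ⟨N, fun m hm => ?_⟩
    intro he
    exact absurd he (hcon m hm)
  have hgn : g (τ n) = hex.choose := by rw [hg]; simp only [dif_pos hex]
  have hspec := hex.choose_spec n ?_ rfl
  · exact hspec
  · rw [← hgn]
    exact le_trans (Finset.le_sup (Finset.mem_univ (τ n))) hn

/-- A bounded sequence of naturals has a "liminf" value: eventually at least `μ`,
and equal to `μ` infinitely often. -/
theorem nat_seq_liminf (f : ℕ → ℕ) (B : ℕ) (hB : ∀ n, f n ≤ B) :
    ∃ μ N2, (∀ n, N2 ≤ n → μ ≤ f n) ∧ (∀ N, ∃ n ≥ N, f n = μ) := by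
  classical
  set S : Set ℕ := {v | ∀ N, ∃ n ≥ N, f n = v} with hS
  have hSne : S.Nonempty := by
    by_contra hcon
    rw [Set.not_nonempty_iff_eq_empty] at hcon
    have hvb : ∀ v, ∃ Nv, ∀ n ≥ Nv, f n ≠ v := by
      intro v
      have : v ∉ S := by rw [hcon]; exact Set.notMem_empty v
      rw [hS, Set.mem_setOf_eq] at this
      push_neg at this
      obtain ⟨N, hN⟩ := this
      exact ⟨N, fun n hn he => hN n hn he⟩
    choose Nv hNv using hvb
    set N' := (Finset.range (B+1)).sup Nv with hN'
    exact hNv (f N') N' (le_trans (Finset.le_sup (Finset.mem_range.mpr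
      (Nat.lt_succ_of_le (hB N')))) (le_refl N')) rfl
  set μ := sInf S with hμ
  have hμS : μ ∈ S := Nat.sInf_mem hSne
  have hlow : ∀ v < μ, ∃ Nv, ∀ n ≥ Nv, f n ≠ v := by
    intro v hv
    have hvS : v ∉ S := fun h => absurd (Nat.sInf_le h) (by omega)
    rw [hS, Set.mem_setOf_eq] at hvS
    push_neg at hvS
    obtain ⟨N, hN⟩ := hvS
    exact ⟨N, fun n hn he => hN n hn he⟩
  choose Nv hNv using fun v (h : v < μ) => hlow v h
  refine ⟨μ, (Finset.range μ).sup (fun v => if h : v < μ then Nv v h else 0), fun n hn => ?_, hμS⟩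
  by_contra hcon
  push_neg at hcon
  have h1 : Nv (f n) hcon ≤ n := by
    refine le_trans ?_ hn
    have h2 := Finset.le_sup (f := fun v => if h : v < μ then Nv v h else 0)
      (Finset.mem_range.mpr hcon)
    simpa [dif_pos hcon] using h2
  exact hNv (f n) hcon n h1 rfl

/-! ### Mean payoff bounds -/

theorem prefW_le (A : Arena Q) (τ : ℕ → Q) (W : ℕ) (hW : ∀ a b, (A.w a b).natAbs ≤ W)
    (n : ℕ) : (prefWeight A τ n : ℝ) ≤ (W : ℝ) * n := by
  have h1 : prefWeight A τ n ≤ (W : ℤ) * n := by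
    rw [prefWeight]
    calc ∑ j ∈ Finset.range n, A.w (τ j) (τ (j+1))
        ≤ ∑ _j ∈ Finset.range n, (W:ℤ) := Finset.sum_le_sum (fun j _ => by
          have := hW (τ j) (τ (j+1)); omega)
      _ = (W:ℤ) * n := by rw [Finset.sum_const, Finset.card_range]; ring
  exact_mod_cast h1

theorem prefW_ge (A : Arena Q) (τ : ℕ → Q) (W : ℕ) (hW : ∀ a b, (A.w a b).natAbs ≤ W)
    (n : ℕ) : -((W : ℝ) * n) ≤ (prefWeight A τ n : ℝ) := by
  have h1 : -((W : ℤ) * n) ≤ prefWeight A τ n := by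
    rw [prefWeight]
    calc -((W:ℤ) * n) = ∑ _j ∈ Finset.range n, -(W:ℤ) := by
          rw [Finset.sum_const, Finset.card_range]; ring
      _ ≤ _ := Finset.sum_le_sum (fun j _ => by
          have := hW (τ j) (τ (j+1)); omega)
  exact_mod_cast h1

theorem le_mpAvg_of_linear (A : Arena Q) (τ : ℕ → Q) (W : ℕ)
    (hW : ∀ a b, (A.w a b).natAbs ≤ W) (b C : ℝ)
    (h : ∀ n : ℕ, b * n - C ≤ (prefWeight A τ n : ℝ)) : b ≤ mpAvg A τ := by
  set u : ℕ → ℝ := fun n => (prefWeight A τ n : ℝ) / n with hu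
  have hub : ∀ n, u n ≤ (W:ℝ) ⊔ 0 := by
    intro n
    rcases Nat.eq_zero_or_pos n with hn | hn
    · subst hn; simp [hu, prefWeight]
    · have hn' : (0:ℝ) < n := by exact_mod_cast hn
      refine le_trans ?_ le_sup_left
      show (prefWeight A τ n : ℝ) / n ≤ (W:ℝ)
      rw [div_le_iff₀ hn']
      exact prefW_le A τ W hW n
  have hbdd : IsBoundedUnder (· ≤ ·) atTop u :=
    ⟨(W:ℝ) ⊔ 0, by rw [eventually_map]; exact Eventually.of_forall hub⟩
  have hcob : IsCoboundedUnder (· ≥ ·) atTop u := hbdd.isCoboundedUnder_ge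
  have key : ∀ η : ℝ, 0 < η → b - η ≤ liminf u atTop := by
    intro η hη
    refine le_liminf_of_le hcob ?_
    obtain ⟨n0, hn0⟩ := exists_nat_ge (C / η)
    filter_upwards [eventually_ge_atTop (max 1 n0)] with n hn
    have hn1 : 1 ≤ n := le_trans (le_max_left _ _) hn
    have hnn : (0:ℝ) < n := by exact_mod_cast hn1
    have hC : C ≤ η * n := by
      have h2 : (n0:ℝ) ≤ n := by exact_mod_cast le_trans (le_max_right 1 n0) hn
      have h3 : C / η ≤ n := le_trans hn0 h2
      calc C = (C / η) * η := by field_simp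
        _ ≤ (n:ℝ) * η := by nlinarith
        _ = η * n := by ring
    show b - η ≤ (prefWeight A τ n : ℝ) / n
    rw [le_div_iff₀ hnn]
    have h4 := h n
    nlinarith
  have hfin : ∀ η : ℝ, 0 < η → b ≤ mpAvg A τ + η := by
    intro η hη
    have := key η hη
    rw [mpAvg]
    have heq : liminf u atTop =
        liminf (fun i : ℕ => (prefWeight A τ i : ℝ) / (i : ℝ)) atTop := rfl
    linarith [heq ▸ this]
  exact le_of_forall_pos_le_add hfin

theorem eventually_prefW_ge (A : Arena Q) (τ : ℕ → Q) (W : ℕ)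
    (hW : ∀ a b, (A.w a b).natAbs ≤ W) {v b : ℝ} (hb : b < v) (hv : v ≤ mpAvg A τ) :
    ∃ N1, ∀ n, N1 ≤ n → 1 ≤ n → b * n ≤ (prefWeight A τ n : ℝ) := by
  set u : ℕ → ℝ := fun n => (prefWeight A τ n : ℝ) / n with hu
  have hlb : ∀ n, -((W:ℝ)) - 1 ≤ u n := by
    intro n
    rcases Nat.eq_zero_or_pos n with hn | hn
    · subst hn
      have h0 : (0:ℝ) ≤ (W:ℝ) := Nat.cast_nonneg W
      simp [hu, prefWeight]
      linarith
    · have hnn : (0:ℝ) < n := by exact_mod_cast hn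
      show -(W:ℝ) - 1 ≤ (prefWeight A τ n : ℝ) / n
      rw [le_div_iff₀ hnn]
      have h1 := prefW_ge A τ W hW n
      have h2 : (1:ℝ) ≤ n := by exact_mod_cast hn
      have h0 : (0:ℝ) ≤ (W:ℝ) := Nat.cast_nonneg W
      nlinarith
  have hbdd : IsBoundedUnder (· ≥ ·) atTop u :=
    ⟨-(W:ℝ) - 1, by rw [eventually_map]; exact Eventually.of_forall hlb⟩
  have hlim : b < liminf u atTop := lt_of_lt_of_le hb hv
  have hev := eventually_lt_of_lt_liminf hlim hbdd
  rw [eventually_atTop] at hev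
  obtain ⟨N1, hN1⟩ := hev
  refine ⟨N1, fun n hn hn1 => ?_⟩
  have h2 : b < (prefWeight A τ n : ℝ) / n := hN1 n hn
  have hnn : (0:ℝ) < n := by exact_mod_cast hn1
  rw [lt_div_iff₀ hnn] at h2
  exact le_of_lt h2

end MPF
namespace MPF
open Filter
variable {Q : Type}

section Koenig
variable [Fintype Q] {A : Arena Q} {Ef : Q → Q → Prop} {σ : Strategy A} {q0 : Q} {c v : ℝ}

set_option maxHeartbeats 1000000 in
theorem bound_exists (hc : c < v)
    (hwin : ∀ π : Strategy A, v ≤ mpAvg A (play A σ π q0) ∧ FairPlay Ef (play A σ π q0)) :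
    ∃ K : ℕ, ∀ h, Nice A σ q0 h → PairFree A Ef q0 c h → h.length ≤ K := by
  classical
  by_contra hcon
  push_neg at hcon
  -- extendable nonempty histories
  set P : List Q → Prop := fun p => p ≠ [] ∧ ∀ n, ∃ h,
    (Nice A σ q0 h ∧ PairFree A Ef q0 c h) ∧ p <+: h ∧ n ≤ h.length with hPdef
  have hq0 : P [q0] := by
    simp only [hPdef]
    constructor
    · simp
    · intro n
      obtain ⟨h, hN, hP, hlen⟩ := hcon n
      refine ⟨h, ⟨hN, hP⟩, ?_, le_of_lt hlen⟩
      have hne : h ≠ [] := by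
        intro he; rw [he] at hlen; simp at hlen
      have h1 : [q0] = h.take 1 := by
        rw [take_one_eq h hne q0, hN.1]
      rw [h1]
      exact List.take_prefix _ _
  have hstep : ∀ p, P p → ∃ x, P (p ++ [x]) := by
    intro p hp
    by_contra hcon2
    push_neg at hcon2
    have hcon3 : ∀ x, ∃ n, ∀ h,
        (Nice A σ q0 h ∧ PairFree A Ef q0 c h) → p ++ [x] <+: h → h.length < n := by
      intro x
      have h1 : ¬ P (p ++ [x]) := hcon2 x
      rw [hPdef] at h1
      have h2 : ¬ ∀ n, ∃ h, (Nice A σ q0 h ∧ PairFree A Ef q0 c h) ∧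
          p ++ [x] <+: h ∧ n ≤ h.length := fun hB => h1 ⟨by simp, hB⟩
      push_neg at h2
      exact h2
    choose g hg using hcon3
    have hp2 := hp.2
    obtain ⟨h, ⟨hN, hP⟩, hpre, hlen⟩ := hp2 (p.length + 1 + Finset.univ.sup g)
    have hplen : p.length < h.length := by omega
    have hpre2 : p ++ [h.getD p.length q0] <+: h := by
      have h1 : p = h.take p.length := prefix_eq_take hpre
      have h2 : h.take (p.length + 1) = h.take p.length ++ [h.getD p.length q0] :=
        take_succ_getD h hplen q0
      nth_rewrite 1 [h1]
      rw [← h2]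
      exact List.take_prefix _ _
    have h3 := hg (h.getD p.length q0) h ⟨hN, hP⟩ hpre2
    have h4 : g (h.getD p.length q0) ≤ Finset.univ.sup g :=
      Finset.le_sup (Finset.mem_univ _)
    omega
  -- build an infinite branch
  let F : ℕ → {p : List Q // P p} := fun n => Nat.rec ⟨[q0], hq0⟩
    (fun _ ih => ⟨ih.1 ++ [(hstep ih.1 ih.2).choose], (hstep ih.1 ih.2).choose_spec⟩) n
  have hFs : ∀ n, ∃ x, (F (n+1)).1 = (F n).1 ++ [x] := fun n => ⟨_, rfl⟩
  have hFlen : ∀ n, (F n).1.length = n + 1 := by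
    intro n
    induction n with
    | zero => rfl
    | succ n ih =>
      obtain ⟨x, hx⟩ := hFs n
      rw [hx]; simp [ih]
  have hFpref : ∀ m n, m ≤ n → (F m).1 <+: (F n).1 := by
    intro m n hmn
    induction n with
    | zero =>
      have : m = 0 := by omega
      subst this; exact List.prefix_refl _
    | succ n ih =>
      rcases Nat.lt_or_ge m (n+1) with h1 | h1
      · obtain ⟨x, hx⟩ := hFs n
        rw [hx]
        exact (ih (by omega)).trans (List.prefix_append _ _)
      · have : m = n + 1 := by omega
        subst this; exact List.prefix_refl _
  set τf : ℕ → Q := fun i => (F i).1.getD i q0 with hτf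
  have hτget : ∀ n i, i ≤ n → (F n).1.getD i q0 = τf i := by
    intro n i hi
    have h1 := hFpref i n hi
    have h2 : i < (F i).1.length := by rw [hFlen]; omega
    rw [hτf]
    exact getD_prefix h1 h2 q0
  have hFlist : ∀ n, (F n).1 = (List.range (n+1)).map τf := by
    intro n
    apply List.ext_getElem
    · simp [hFlen]
    · intro i h1 h2
      rw [← List.getD_eq_getElem _ q0 h1]
      have h3 : i < n + 1 := by rw [hFlen] at h1; omega
      rw [hτget n i (by omega)]
      simp
  have hFP : ∀ n, Nice A σ q0 (F n).1 ∧ PairFree A Ef q0 c (F n).1 := by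
    intro n
    obtain ⟨h, ⟨hN, hP⟩, hpre, _⟩ := (F n).2.2 0
    exact ⟨Nice_prefix hpre hN, PairFree_prefix hpre hP⟩
  -- the opponent following the branch
  have hedge : ∀ (H : List Q) (x : Q), A.edge x (if A.edge x (τf (H.length + 1))
      then τf (H.length+1) else (A.succ_exists x).choose) := by
    intro H x
    split
    · assumption
    · exact (A.succ_exists x).choose_spec
  set πt : Strategy A := ⟨fun H x => if A.edge x (τf (H.length + 1))
    then τf (H.length+1) else (A.succ_exists x).choose, hedge⟩ with hπt
  have hplayτ : ∀ n, ∀ i, i ≤ n → play A σ πt q0 i = τf i := by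
    intro n
    induction n with
    | zero =>
      intro i hi
      have : i = 0 := by omega
      subst this
      simp only [hτf]
      rfl
    | succ n ih =>
      intro i hi
      rcases Nat.lt_or_ge i (n+1) with h1 | h1
      · exact ih i (by omega)
      · have hi2 : i = n + 1 := by omega
        subst hi2
        have hN := (hFP (n+1)).1
        have hlen2 : (F (n+1)).1.length = n + 2 := hFlen (n+1)
        have hgn : (F (n+1)).1.getD n q0 = τf n := hτget (n+1) n (by omega)
        have hgn1 : (F (n+1)).1.getD (n+1) q0 = τf (n+1) := hτget (n+1) (n+1) (le_refl _)
        have hhist : (hist A σ πt q0 n).1 = (List.range n).map τf := by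
          rw [hist_fst]
          apply List.map_congr_left
          intro a ha
          simp only [List.mem_range] at ha
          exact ih a (by omega)
        by_cases hmem : play A σ πt q0 n ∈ A.p1
        · rw [play_succ_mem A σ πt q0 hmem, hhist, ih n (le_refl _)]
          have hmem' : (F (n+1)).1.getD n q0 ∈ A.p1 := by
            rw [hgn, ← ih n (le_refl _)]; exact hmem
          have hssc := hN.2.2 n (by omega) hmem'
          rw [hgn, hgn1] at hssc
          have htk : (F (n+1)).1.take n = (List.range n).map τf := by
            rw [hFlist (n+1), ← List.map_take, List.take_range, min_eq_left (by omega)]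
          rw [hssc, htk]
        · rw [play_succ_notMem A σ πt q0 hmem]
          have hHlen : (hist A σ πt q0 n).1.length = n := by rw [hhist]; simp
          have hE := hN.2.1 n (by omega)
          rw [hgn, hgn1] at hE
          have hpn : play A σ πt q0 n = τf n := ih n (le_refl _)
          show (if A.edge (play A σ πt q0 n) (τf ((hist A σ πt q0 n).1.length + 1))
            then τf ((hist A σ πt q0 n).1.length+1)
            else (A.succ_exists (play A σ πt q0 n)).choose) = τf (n+1)
          rw [hHlen, hpn, if_pos hE]
  have hplay : play A σ πt q0 = τf := funext fun n => hplayτ n n (le_refl _)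
  obtain ⟨hmp, hfair⟩ := hwin πt
  rw [hplay] at hmp hfair
  -- analytic part
  set W : ℕ := Finset.univ.sup (fun a : Q => Finset.univ.sup
    (fun b : Q => (A.w a b).natAbs)) with hWdef
  have hWb : ∀ a b : Q, (A.w a b).natAbs ≤ W := by
    intro a b
    have h1 : (A.w a b).natAbs ≤ Finset.univ.sup (fun b : Q => (A.w a b).natAbs) :=
      Finset.le_sup (f := fun b : Q => (A.w a b).natAbs) (Finset.mem_univ b)
    have h2 : Finset.univ.sup (fun b : Q => (A.w a b).natAbs) ≤ W := by
      rw [hWdef]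
      exact Finset.le_sup (f := fun a : Q => Finset.univ.sup
        fun b : Q => (A.w a b).natAbs) (Finset.mem_univ a)
    omega
  obtain ⟨N0, hN0⟩ := eventually_infOcc τf
  have hio : ∀ N, ∃ m ≥ N, τf m = τf N0 := hN0 N0 (le_refl _)
  set η := (v - c)/2 with hηdef
  have hηpos : 0 < η := by rw [hηdef]; linarith
  have hveta : v - η = c + η := by rw [hηdef]; ring
  obtain ⟨N1, hN1⟩ := eventually_prefW_ge A τf W hWb (show v - η < v by linarith) hmp
  -- fair-edge selection with a uniform bound
  have hsel : ∀ x x', Ef x x' → (∀ N, ∃ m ≥ N, τf m = x) →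
      ∃ t, N0 + 1 ≤ t ∧ τf t = x ∧ τf (t+1) = x' := by
    intro x x' he hocc
    obtain ⟨t, ht1, ht2, ht3⟩ := hfair x x' he hocc (N0+1)
    exact ⟨t, ht1, ht2, ht3⟩
  set g2 : Q × Q → ℕ := fun p =>
    if h : Ef p.1 p.2 ∧ (∀ N, ∃ m ≥ N, τf m = p.1) then (hsel p.1 p.2 h.1 h.2).choose
    else 0 with hg2
  set T0 := 1 + Finset.univ.sup g2 with hT0
  have hsel2 : ∀ x x', Ef x x' → (∀ N, ∃ m ≥ N, τf m = x) →
      ∃ s, N0 ≤ s ∧ s + 1 ≤ T0 ∧ τf s = x ∧ τf (s+1) = x' := by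
    intro x x' he hocc
    have hcond : Ef (x, x').1 (x, x').2 ∧ (∀ N, ∃ m ≥ N, τf m = (x, x').1) := ⟨he, hocc⟩
    have hspec := (hsel x x' he hocc).choose_spec
    have hbe : g2 (x, x') = (hsel x x' he hocc).choose := by
      rw [hg2]; simp only [dif_pos hcond]
    have hb : g2 (x, x') ≤ Finset.univ.sup g2 := Finset.le_sup (Finset.mem_univ (x, x'))
    refine ⟨(hsel x x' he hocc).choose, by omega, by omega, hspec.2.1, hspec.2.2⟩
  -- choose the closing time j
  obtain ⟨J, hJ⟩ := exists_nat_ge (((prefWeight A τf N0 : ℝ) - c * N0) / η)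
  obtain ⟨j, hj, hjq⟩ := hio (max (max N1 T0) (max J (N0+1)))
  have hjN1 : N1 ≤ j := le_trans (le_trans (le_max_left _ _) (le_max_left _ _)) hj
  have hjT0 : T0 ≤ j := le_trans (le_trans (le_max_right _ _) (le_max_left _ _)) hj
  have hjJ : J ≤ j := le_trans (le_trans (le_max_left _ _) (le_max_right _ _)) hj
  have hjN0 : N0 + 1 ≤ j := le_trans (le_trans (le_max_right _ _) (le_max_right _ _)) hj
  have hj1 : 1 ≤ j := by omega
  have hlen := hFlen j
  have hlist := hFlist j
  have hgood : Good A Ef q0 c ((F j).1) N0 := by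
    refine ⟨by omega, ?_, ?_, ?_⟩
    · rw [hτget j N0 (by omega)]
      have h5 : (F j).1.length - 1 = j := by omega
      rw [h5, hτget j j (le_refl _), hjq]
    · have hW1 : lW A q0 (F j).1 = prefWeight A τf j := by
        rw [hlist]; exact lW_map_range A q0 τf j
      have htake : (F j).1.take (N0+1) = (List.range (N0+1)).map τf := by
        rw [hlist, ← List.map_take, List.take_range, min_eq_left (by omega)]
      have hW2 : lW A q0 ((F j).1.take (N0+1)) = prefWeight A τf N0 := by
        rw [htake]; exact lW_map_range A q0 τf N0
      have h5 : (F j).1.length - 1 = j := by omega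
      rw [h5, hW1, hW2]
      have h1 : (v - η) * j ≤ (prefWeight A τf j : ℝ) := hN1 j hjN1 hj1
      have h2 : ((prefWeight A τf N0 : ℝ) - c * N0) / η ≤ (J : ℝ) := hJ
      have h2' : (J : ℝ) ≤ (j : ℝ) := by exact_mod_cast hjJ
      have h3 : (prefWeight A τf N0 : ℝ) - c * N0 ≤ η * j := by
        rw [div_le_iff₀ hηpos] at h2
        nlinarith
      push_cast
      nlinarith
    · intro t ht htl x' hef
      rw [hlen] at htl
      have hgt : (F j).1.getD t q0 = τf t := hτget j t (by omega)
      rw [hgt] at hef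
      obtain ⟨s, hs0, hs1, hs2, hs3⟩ := hsel2 (τf t) x' hef (hN0 t (by omega))
      refine ⟨s, hs0, ?_, ?_, ?_⟩
      · rw [hlen]; omega
      · rw [hτget j s (by omega), hgt, hs2]
      · rw [hτget j (s+1) (by omega)]; exact hs3
  have hPF := (hFP j).2
  have hfin := hPF ((F j).1.length) N0
  rw [List.take_length] at hfin
  exact hfin hgood

end Koenig
end MPF
namespace MPF

section Run
variable {Q : Type} (A : Arena Q) (Ef : Q → Q → Prop) (σ : Strategy A)
  (q0 : Q) (c : ℝ) (K : ℕ) (π : Strategy A)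

/-- Memory along the run of the derived strategy against `π`. -/
noncomputable def Mn : ℕ → List Q := fun n =>
  mem A Ef q0 c K ((hist A (sig' A Ef σ q0 c K) π q0 n).1)

/-- The run itself. -/
noncomputable def τn : ℕ → Q := fun n => play A (sig' A Ef σ q0 c K) π q0 n

/-- Extended memory: memory plus the current node. -/
noncomputable def Sn : ℕ → List Q := fun n =>
  Mn A Ef σ q0 c K π n ++ [τn A Ef σ q0 c K π n]

local notation "MM" => Mn A Ef σ q0 c K π
local notation "SS" => Sn A Ef σ q0 c K π
local notation "ττ" => τn A Ef σ q0 c K π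

theorem Mn_zero : MM 0 = [] := rfl

theorem τn_zero : ττ 0 = q0 := rfl

theorem Sn_def (n : ℕ) : SS n = MM n ++ [ττ n] := rfl

theorem Sn_ne (n : ℕ) : SS n ≠ [] := by rw [Sn_def]; simp

theorem Sn_len (n : ℕ) : (SS n).length = (MM n).length + 1 := by rw [Sn_def]; simp

theorem Mn_prefix_Sn (n : ℕ) : MM n <+: SS n := ⟨[ττ n], rfl⟩

theorem Sn_getD_last (n : ℕ) : (SS n).getD (MM n).length q0 = ττ n := by
  rw [Sn_def]; exact getD_concat_self _ _ _

theorem Sn_getD_lt {n p : ℕ} (hp : p < (MM n).length) :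
    (SS n).getD p q0 = (MM n).getD p q0 := by
  rw [Sn_def]; exact getD_append_left' hp q0

theorem Mn_succ (n : ℕ) : MM (n+1) = upd A Ef q0 c K (MM n) (ττ n) := by
  show mem A Ef q0 c K ((hist A (sig' A Ef σ q0 c K) π q0 (n+1)).1) = _
  rw [show (hist A (sig' A Ef σ q0 c K) π q0 (n+1)).1
    = (hist A (sig' A Ef σ q0 c K) π q0 n).1 ++ [(hist A (sig' A Ef σ q0 c K) π q0 n).2]
    from rfl, mem_append]
  rfl

theorem Mn_succ_cut {n : ℕ} (hlen : (MM n).length ≤ K) :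
    MM (n+1) = cut A Ef q0 c (SS n) := by
  rw [Mn_succ, upd]
  have h1 : (cut A Ef q0 c (MM n ++ [ττ n])).length ≤ K + 1 := by
    refine le_trans (cut_length_le _) ?_
    simp; omega
  rw [if_pos h1]
  rfl

theorem τn_edge (n : ℕ) : A.edge (ττ n) (ττ (n+1)) := by
  by_cases hm : ττ n ∈ A.p1
  · show A.edge _ (play A (sig' A Ef σ q0 c K) π q0 (n+1))
    rw [play_succ_mem A (sig' A Ef σ q0 c K) π q0 hm]
    exact (sig' A Ef σ q0 c K).2 _ _
  · show A.edge _ (play A (sig' A Ef σ q0 c K) π q0 (n+1))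
    rw [play_succ_notMem A (sig' A Ef σ q0 c K) π q0 hm]
    exact π.2 _ _

theorem τn_step_mem {n : ℕ} (hm : ττ n ∈ A.p1) :
    ττ (n+1) = σ.1 ((MM (n+1)).dropLast) (ττ n) := by
  show play A (sig' A Ef σ q0 c K) π q0 (n+1) = _
  rw [play_succ_mem A (sig' A Ef σ q0 c K) π q0 hm, Mn_succ]
  rfl

/-- The weight inequality carried along the run. -/
def WIneq (n : ℕ) : Prop :=
  c * ((n + 1 : ℝ) - ((SS n).length : ℝ)) + ((lW A q0 (SS n) : ℤ) : ℝ)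
    ≤ ((prefWeight A ττ n : ℤ) : ℝ)

/-- Master invariant along the run. -/
theorem run_inv (hK : ∀ h, Nice A σ q0 h → PairFree A Ef q0 c h → h.length ≤ K) :
    ∀ n : ℕ, Nice A σ q0 (SS n) ∧ PairFree A Ef q0 c (MM n) ∧
      (MM n).length ≤ n ∧ WIneq A Ef σ q0 c K π n := by
  have lenK : ∀ n, Nice A σ q0 (SS n) → PairFree A Ef q0 c (MM n) → (MM n).length ≤ K :=
    fun n hN hP => hK _ (Nice_prefix (Mn_prefix_Sn A Ef σ q0 c K π n) hN) hP
  intro n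
  induction n with
  | zero =>
    refine ⟨?_, ?_, ?_, ?_⟩
    · constructor
      · rw [Sn_def, Mn_zero]; simpa [List.getD] using (τn_zero A Ef σ q0 c K π)
      · constructor
        · intro t ht; rw [Sn_len, Mn_zero] at ht; simp at ht
        · intro t ht; rw [Sn_len, Mn_zero] at ht; simp at ht
    · intro k i hG
      rw [Mn_zero] at hG
      have := hG.1
      simp at this
    · rw [Mn_zero]; simp
    · rw [WIneq, Sn_len, Mn_zero]
      simp [prefWeight, lW, Sn_def, Mn_zero]
  | succ n ih =>
    obtain ⟨hN, hP, hln, hw⟩ := ih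
    have hK1 : (MM n).length ≤ K := lenK n hN hP
    have hcut : MM (n+1) = cut A Ef q0 c (SS n) := Mn_succ_cut A Ef σ q0 c K π hK1
    have hpre : MM (n+1) <+: SS n := by rw [hcut]; exact cut_prefix _
    have hNM : Nice A σ q0 (MM (n+1)) := Nice_prefix hpre hN
    have hMne : MM (n+1) ≠ [] := by rw [hcut]; exact cut_ne_nil (Sn_ne A Ef σ q0 c K π n)
    have hMlen1 : 1 ≤ (MM (n+1)).length := List.length_pos_iff.mpr hMne
    have hlast : (MM (n+1)).getD ((MM (n+1)).length - 1) q0 = ττ n := by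
      rw [hcut, cut_last (Sn_ne A Ef σ q0 c K π n)]
      rw [Sn_len]
      simp only [Nat.add_sub_cancel]
      exact Sn_getD_last A Ef σ q0 c K π n
    have hMlenSn : (MM (n+1)).length ≤ (MM n).length + 1 := by
      rw [hcut, ← Sn_len]; exact cut_length_le _
    -- new nice
    have hNice1 : Nice A σ q0 (SS (n+1)) := by
      rw [Sn_def]
      refine Nice_concat hNM hMne ?_ ?_
      · rw [hlast]; exact τn_edge A Ef σ q0 c K π n
      · rw [hlast]
        intro hm
        exact τn_step_mem A Ef σ q0 c K π hm
    -- new pairfree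
    have hPF1 : PairFree A Ef q0 c (MM (n+1)) := by
      by_cases hp : ∃ i, Good A Ef q0 c (SS n) i
      · have hGl := hp.choose_spec.1
        rw [Sn_len] at hGl
        have htk : MM (n+1) = (MM n).take (hp.choose + 1) := by
          rw [hcut, cut_of_pos hp]
          exact prefix_take_eq (Mn_prefix_Sn A Ef σ q0 c K π n) (by omega)
        rw [htk]
        exact PairFree_take hP _
      · have heq : MM (n+1) = SS n := by rw [hcut, cut_of_neg hp]
        rw [heq]
        intro k i
        rcases le_or_gt k ((MM n).length) with h1 | h1
        · have h2 : (SS n).take k = (MM n).take k :=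
            prefix_take_eq (Mn_prefix_Sn A Ef σ q0 c K π n) h1
          rw [h2]; exact hP k i
        · have h2 : (SS n).take k = SS n := by
            apply List.take_of_length_le
            rw [Sn_len]; omega
          rw [h2]
          intro hG
          exact hp ⟨i, hG⟩
    refine ⟨hNice1, hPF1, by omega, ?_⟩
    -- weight inequality
    have hwnew : prefWeight A ττ (n+1) = prefWeight A ττ n + A.w (ττ n) (ττ (n+1)) := by
      rw [prefWeight, prefWeight, Finset.sum_range_succ]
    have hWS : lW A q0 (SS (n+1)) = lW A q0 (MM (n+1)) + A.w (ττ n) (ττ (n+1)) := by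
      rw [Sn_def, lW_concat A q0 hMne, hlast]
    have hlenS1 : ((SS (n+1)).length : ℝ) = ((MM (n+1)).length : ℝ) + 1 := by
      rw [Sn_len]; push_cast; ring
    rw [WIneq, hlenS1, hWS, hwnew]
    push_cast
    by_cases hp : ∃ i, Good A Ef q0 c (SS n) i
    · have hG := hp.choose_spec
      have hGl := hG.1
      rw [Sn_len] at hGl
      have hMl : (MM (n+1)).length = hp.choose + 1 := by
        rw [hcut, cut_length_pos_eq hp]
      have hwgt := hG.2.2.1
      have hcast1 : (((SS n).length - 1 : ℕ) : ℝ) = ((MM n).length : ℝ) := by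
        rw [Sn_len]; simp
      rw [hcast1] at hwgt
      have hlwcut : lW A q0 (MM (n+1)) = lW A q0 ((SS n).take (hp.choose + 1)) := by
        rw [hcut, cut_of_pos hp]
      rw [WIneq] at hw
      rw [hMl, hlwcut]
      rw [Sn_len] at hw
      push_cast at hw hwgt ⊢
      linarith
    · have heq : MM (n+1) = SS n := by rw [hcut, cut_of_neg hp]
      rw [WIneq] at hw
      rw [heq, Sn_len] at *
      push_cast at hw ⊢
      linarith

end Run
end MPF
namespace MPF
open Filter

section Run2
variable {Q : Type} (A : Arena Q) (Ef : Q → Q → Prop) (σ : Strategy A)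
  (q0 : Q) (c : ℝ) (K : ℕ) (π : Strategy A)

local notation "MM" => Mn A Ef σ q0 c K π
local notation "SS" => Sn A Ef σ q0 c K π
local notation "ττ" => τn A Ef σ q0 c K π

theorem run_mp (hK : ∀ h, Nice A σ q0 h → PairFree A Ef q0 c h → h.length ≤ K)
    (W : ℕ) (hWb : ∀ a b, (A.w a b).natAbs ≤ W) : c ≤ mpAvg A ττ := by
  have hinv := run_inv A Ef σ q0 c K π hK
  apply le_mpAvg_of_linear A ττ W hWb c ((|c| + W) * (K + 1))
  intro n
  obtain ⟨hN, hP, hln, hw⟩ := hinv n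
  have hK1 : (MM n).length ≤ K :=
    hK _ (Nice_prefix (Mn_prefix_Sn A Ef σ q0 c K π n) hN) hP
  rw [WIneq] at hw
  have hls : (SS n).length = (MM n).length + 1 := Sn_len A Ef σ q0 c K π n
  have hl1 : (1:ℝ) ≤ ((SS n).length : ℝ) := by
    rw [hls]; push_cast; linarith [Nat.cast_nonneg (α := ℝ) (MM n).length]
  have hl2 : ((SS n).length : ℝ) ≤ (K:ℝ) + 1 := by
    rw [hls]; push_cast
    have : ((MM n).length : ℝ) ≤ (K : ℝ) := by exact_mod_cast hK1
    linarith
  have hWint : ∀ a b : Q, -(W:ℤ) ≤ A.w a b := by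
    intro a b; have := hWb a b; omega
  have hlw : -((W:ℝ) * ((SS n).length : ℝ)) ≤ ((lW A q0 (SS n) : ℤ) : ℝ) := by
    exact_mod_cast lW_ge A q0 W hWint (SS n)
  have hca : c ≤ |c| := le_abs_self c
  have hcb : 0 ≤ |c| := abs_nonneg c
  have hWnn : (0:ℝ) ≤ (W:ℝ) := Nat.cast_nonneg W
  nlinarith [mul_nonneg (sub_nonneg.2 hca) (sub_nonneg.2 hl1),
    mul_nonneg hcb (sub_nonneg.2 hl2), mul_nonneg hWnn (sub_nonneg.2 hl2),
    mul_nonneg hcb (by linarith : (0:ℝ) ≤ (K:ℝ) + 2 - ((SS n).length : ℝ))]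

set_option maxHeartbeats 1000000 in
theorem run_fair (hK : ∀ h, Nice A σ q0 h → PairFree A Ef q0 c h → h.length ≤ K) :
    FairPlay Ef ττ := by
  classical
  have hinv := run_inv A Ef σ q0 c K π hK
  have hK1 : ∀ n, (MM n).length ≤ K := fun n =>
    hK _ (Nice_prefix (Mn_prefix_Sn A Ef σ q0 c K π n) (hinv n).1) (hinv n).2.1
  have hcut : ∀ n, MM (n+1) = cut A Ef q0 c (SS n) := fun n =>
    Mn_succ_cut A Ef σ q0 c K π (hK1 n)
  have hpre : ∀ n, MM (n+1) <+: SS n := fun n => (hcut n) ▸ cut_prefix _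
  have hMne : ∀ n, MM (n+1) ≠ [] := fun n =>
    (hcut n) ▸ cut_ne_nil (Sn_ne A Ef σ q0 c K π n)
  have hMl1 : ∀ n, 1 ≤ (MM (n+1)).length := fun n => List.length_pos_iff.mpr (hMne n)
  have hlast : ∀ n, (MM (n+1)).getD ((MM (n+1)).length - 1) q0 = ττ n := by
    intro n
    rw [hcut n, cut_last (Sn_ne A Ef σ q0 c K π n), Sn_len]
    simp only [Nat.add_sub_cancel]
    exact Sn_getD_last A Ef σ q0 c K π n
  have hMlenSn : ∀ n, (MM (n+1)).length ≤ (MM n).length + 1 := fun n => by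
    rw [hcut n, ← Sn_len]; exact cut_length_le _
  obtain ⟨μ, N2, hN2, hμio⟩ := nat_seq_liminf (fun n => (MM (n+1)).length) (K+1)
    (fun n => le_trans (hMlenSn n) (by have := hK1 n; omega))
  have hμ1 : 1 ≤ μ := by
    obtain ⟨n, _, he⟩ := hμio 0
    have := hMl1 n
    omega
  have hN2' : ∀ n, N2 + 1 ≤ n → μ ≤ (MM n).length := by
    intro n hn
    obtain ⟨m, rfl⟩ : ∃ m, n = m + 1 := ⟨n - 1, by omega⟩
    exact hN2 m (by omega)
  intro q q' hqq' hio N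
  obtain ⟨n2, hn2ge, hn2eq⟩ := hμio (max N N2)
  have hn2N : N ≤ n2 := le_trans (le_max_left _ _) hn2ge
  have hn2N2 : N2 ≤ n2 := le_trans (le_max_right _ _) hn2ge
  -- the adjacency-provenance invariant
  have hD : ∀ n, n2 + 1 ≤ n → ∀ p, μ - 1 ≤ p → p + 1 ≤ (MM n).length →
      ∃ t, n2 ≤ t ∧ ττ t = (SS n).getD p q0 ∧ ττ (t+1) = (SS n).getD (p+1) q0 := by
    intro n hn
    induction n, hn using Nat.le_induction with
    | base =>
      intro p hp1 hp2
      rw [hn2eq] at hp2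
      refine ⟨n2, le_refl _, ?_, ?_⟩
      · rw [Sn_getD_lt A Ef σ q0 c K π (by omega), show p = (MM (n2+1)).length - 1 by omega]
        exact (hlast n2).symm
      · rw [show p + 1 = (MM (n2+1)).length by omega]
        exact (Sn_getD_last A Ef σ q0 c K π (n2+1)).symm
    | succ n hn ih =>
      intro p hp1 hp2
      rcases lt_or_eq_of_le hp2 with h1 | h1
      · have hlenle : (MM (n+1)).length ≤ (SS n).length := by
          rw [hcut n]; exact cut_length_le _
        rw [Sn_len] at hlenle
        have hg1 : (SS (n+1)).getD p q0 = (SS n).getD p q0 := by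
          rw [Sn_getD_lt A Ef σ q0 c K π (by omega)]
          exact (getD_prefix (hpre n) (by omega) q0).symm
        have hg2 : (SS (n+1)).getD (p+1) q0 = (SS n).getD (p+1) q0 := by
          rw [Sn_getD_lt A Ef σ q0 c K π (by omega)]
          exact (getD_prefix (hpre n) (by omega) q0).symm
        obtain ⟨t, ht1, ht2, ht3⟩ := ih p hp1 (by omega)
        exact ⟨t, ht1, by rw [hg1]; exact ht2, by rw [hg2]; exact ht3⟩
      · refine ⟨n, by omega, ?_, ?_⟩
        · rw [Sn_getD_lt A Ef σ q0 c K π (by omega), show p = (MM (n+1)).length - 1 by omega]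
          exact (hlast n).symm
        · rw [show p + 1 = (MM (n+1)).length from h1]
          exact (Sn_getD_last A Ef σ q0 c K π (n+1)).symm
  -- an occurrence of q after the anchor
  obtain ⟨ns, hns, hnsq⟩ := hio (n2 + 2)
  have hps : μ ≤ (MM ns).length := hN2' ns (by omega)
  have hPd : ∃ t, ns ≤ t ∧ (MM (t+1)).length ≤ (MM ns).length := by
    obtain ⟨nd, hnd, hndeq⟩ := hμio ns
    exact ⟨nd, hnd, by omega⟩
  have htspec := Nat.find_spec hPd
  have htsmin : ∀ t, t < Nat.find hPd → ¬(ns ≤ t ∧ (MM (t+1)).length ≤ (MM ns).length) :=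
    fun t ht => Nat.find_min hPd ht
  set ts := Nat.find hPd with htsdef
  have htsns : ns ≤ ts := htspec.1
  -- the occurrence of q persists in memory until it is cut out
  have hpers : ∀ t, ns + 1 ≤ t → t ≤ ts → (MM ns).length < (MM t).length ∧
      (MM t).getD ((MM ns).length) q0 = q := by
    intro t ht
    induction t, ht using Nat.le_induction with
    | base =>
      intro hle
      have hlt : ¬((MM (ns+1)).length ≤ (MM ns).length) := by
        intro hcon'
        exact htsmin ns (by omega) ⟨le_refl _, hcon'⟩
      push_neg at hlt
      refine ⟨hlt, ?_⟩
      have h1 : (SS ns).getD ((MM ns).length) q0 = (MM (ns+1)).getD ((MM ns).length) q0 :=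
        getD_prefix (hpre ns) hlt q0
      rw [← h1, Sn_getD_last A Ef σ q0 c K π ns]
      exact hnsq
    | succ t ht ih =>
      intro hle
      obtain ⟨ihlt, iheq⟩ := ih (by omega)
      have hlt : ¬((MM (t+1)).length ≤ (MM ns).length) := by
        intro hcon'
        exact htsmin t (by omega) ⟨by omega, hcon'⟩
      push_neg at hlt
      refine ⟨hlt, ?_⟩
      have h1 : (SS t).getD ((MM ns).length) q0 = (MM (t+1)).getD ((MM ns).length) q0 :=
        getD_prefix (hpre t) hlt q0
      rw [← h1, Sn_getD_lt A Ef σ q0 c K π ihlt]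
      exact iheq
  have htsl : (MM ns).length ≤ (MM ts).length := by
    rcases eq_or_lt_of_le htsns with he | hlt'
    · rw [← he]
    · exact le_of_lt (hpers ts (by omega) (le_refl _)).1
  -- at time ts the cut fires
  have hfired : ∃ i, Good A Ef q0 c (SS ts) i := by
    by_contra hnf
    have h1 : MM (ts+1) = SS ts := by rw [hcut ts, cut_of_neg hnf]
    have h2 : (MM (ts+1)).length = (MM ts).length + 1 := by rw [h1, Sn_len]
    have := htspec.2
    omega
  have hi0len : (MM (ts+1)).length = hfired.choose + 1 := by
    rw [hcut ts, cut_length_pos_eq hfired]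
  have hG := hfired.choose_spec
  have hi0ps : hfired.choose + 1 ≤ (MM ns).length := by
    have := htspec.2; omega
  -- q occurs inside the excised good cycle
  have hqwin : ∃ tq, hfired.choose ≤ tq ∧ tq + 1 < (SS ts).length ∧
      (SS ts).getD tq q0 = q := by
    rcases eq_or_lt_of_le htsns with he | hlt'
    · refine ⟨hfired.choose, le_refl _, hG.1, ?_⟩
      rw [hG.2.1]
      have h5 : (SS ts).length - 1 = (MM ts).length := by rw [Sn_len]; omega
      rw [h5, Sn_getD_last A Ef σ q0 c K π ts, ← he]
      exact hnsq
    · have hp := hpers ts (by omega) (le_refl _)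
      refine ⟨(MM ns).length, by omega, ?_, ?_⟩
      · rw [Sn_len]; omega
      · rw [Sn_getD_lt A Ef σ q0 c K π hp.1]
        exact hp.2
  obtain ⟨tq, htq1, htq2, htq3⟩ := hqwin
  obtain ⟨s, hsi, hslen, hseq, hsq'⟩ := hG.2.2.2 tq htq1 htq2 q' (by rw [htq3]; exact hqq')
  have hμi0 : μ ≤ hfired.choose + 1 := by
    rw [← hi0len]
    exact hN2' (ts+1) (by omega)
  have hslen' : s + 1 ≤ (MM ts).length := by rw [Sn_len] at hslen; omega
  obtain ⟨t, htt, hteq, hteq'⟩ := hD ts (by omega) s (by omega) hslen'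
  refine ⟨t, by omega, ?_, ?_⟩
  · rw [hteq, hseq, htq3]
  · rw [hteq', hsq']

end Run2
end MPF
/-- In a 1-fair mean-payoff game, if the optimal value from
`q0` is `v` (attained), then for every `ε > 0` player 1 has a finite-memory
strategy winning from `q0` for the objective `MP_{v-ε}^f`. -/
theorem onefair_meanpayoff_eps_optimal_finite_memory
    (Q : Type) [Fintype Q] (A : Arena Q) (Ef : Q → Q → Prop)
    (hEf : ∀ a b, Ef a b → A.edge a b)
    (h1fair : ∀ a b, Ef a b → a ∈ A.p1)
    (q0 : Q) (v : ℝ)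
    (hv : Win1 A (MPfObj A Ef v true) q0)
    (hvopt : ∀ u : ℝ, Win1 A (MPfObj A Ef u true) q0 → u ≤ v)
    (ε : ℝ) (hε : 0 < ε) :
    ∃ σ : Strategy A, FiniteMemory A σ ∧
      ∀ π : Strategy A, MPfObj A Ef (v - ε) true (play A σ π q0) := by
  classical
  obtain ⟨σ, hσ⟩ := hv
  have hwin : ∀ π : Strategy A,
      v ≤ mpAvg A (play A σ π q0) ∧ FairPlay Ef (play A σ π q0) := by
    intro π
    have h1 := hσ π
    rw [MPfObj] at h1
    simpa using h1
  have hc : (v - ε) < v := by linarith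
  obtain ⟨K, hK⟩ := MPF.bound_exists hc hwin
  set W : ℕ := Finset.univ.sup (fun a : Q => Finset.univ.sup
    (fun b : Q => (A.w a b).natAbs)) with hWdef
  have hWb : ∀ a b : Q, (A.w a b).natAbs ≤ W := by
    intro a b
    have h1 : (A.w a b).natAbs ≤ Finset.univ.sup (fun b : Q => (A.w a b).natAbs) :=
      Finset.le_sup (f := fun b : Q => (A.w a b).natAbs) (Finset.mem_univ b)
    have h2 : Finset.univ.sup (fun b : Q => (A.w a b).natAbs) ≤ W := by
      rw [hWdef]
      exact Finset.le_sup (f := fun a : Q => Finset.univ.sup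
        fun b : Q => (A.w a b).natAbs) (Finset.mem_univ a)
    omega
  refine ⟨MPF.sig' A Ef σ q0 (v - ε) K, MPF.sig'_finiteMemory σ K, ?_⟩
  intro π
  rw [MPfObj]
  simp only [if_true]
  constructor
  · exact MPF.run_mp A Ef σ q0 (v - ε) K π hK W hWb
  · exact MPF.run_fair A Ef σ q0 (v - ε) K π hK
end

section
/- 2-fair energy games are not determined: there exists a 2-fair energy game (G,E_f,En^f) and a node q of G such that q ∉ Win_1 and q ∉ Win_2. Concretely, this holds for the arena with a player-2 node q having a self-loop of weight −1 and a fair edge of weight 0 to a player-1 node q' that has a self-loop of weight 0, where E_f consists of the single edge (q,q'). -/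
/-!
Common framework: weighted game arenas, plays, strategies, mean-payoff and
energy objectives, strong transition fairness.
-/

open Filter

variable {Q : Type}

/-- The arena of the counterexample: node `false` (= q) is a player-2 node with
a self-loop of weight `-1` and a fair edge of weight `0` to node `true` (= q'),
which is a player-1 node with a self-loop of weight `0`. -/
def exArena : Arena Bool where
  p1 := {b | b = true}
  edge := fun a b => a = true → b = true
  w := fun a b => if a = false ∧ b = false then (-1 : ℤ) else 0
  succ_exists := fun _ => ⟨true, fun _ => rfl⟩

/-- The single fair edge `(q, q') = (false, true)`. -/
def exEf : Bool → Bool → Prop := fun a b => a = false ∧ b = true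


section Aux

lemma hist_len (A : Arena Q) (σ π : Strategy A) (q : Q) (n : ℕ) :
    (hist A σ π q n).1.length = n := by
  induction n with
  | zero => rfl
  | succ n ih => simp [hist, ih]

lemma play_succ_p2 (A : Arena Q) (σ π : Strategy A) (q : Q) (n : ℕ)
    (h : play A σ π q n ∉ A.p1) :
    play A σ π q (n+1) = π.1 (hist A σ π q n).1 (play A σ π q n) := by
  simp only [play, hist]
  exact if_neg h

lemma play_true (σ π : Strategy exArena) (q : Bool) (n : ℕ)
    (h : play exArena σ π q n = true) : play exArena σ π q (n+1) = true := by
  have h1 : play exArena σ π q n ∈ exArena.p1 := h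
  have : play exArena σ π q (n+1) = σ.1 (hist exArena σ π q n).1 (play exArena σ π q n) := by
    simp only [play, hist]
    exact if_pos h1
  rw [this]
  exact σ.2 (hist exArena σ π q n).1 (play exArena σ π q n) h

lemma play_true_ge (σ π : Strategy exArena) (q : Bool) (n m : ℕ) (hnm : n ≤ m)
    (h : play exArena σ π q n = true) : play exArena σ π q m = true := by
  induction m, hnm using Nat.le_induction with
  | base => exact h
  | succ m _ ih => exact play_true σ π q m ih

lemma prefWeight_succ (A : Arena Q) (τ : ℕ → Q) (i : ℕ) :
    prefWeight A τ (i+1) = prefWeight A τ i + A.w (τ i) (τ (i+1)) :=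
  Finset.sum_range_succ _ _

/-- Player 2 spoiler strategy for credit `c`: stay at `false` while the history
is short, then move to `true`. -/
def spoiler (c : ℕ) : Strategy exArena :=
  ⟨fun H q => if q = true then true else if H.length ≤ c then false else true,
   by intro H q hq; subst hq; simp⟩

end Aux

/-- 2-fair energy games are not determined: the concrete game
above is 2-fair, and the node `q = false` is neither in `Win₁` nor in `Win₂`
of the 2-fair energy game. -/
theorem twofair_energy_not_determined :
    (∀ a b, exEf a b → a ∉ exArena.p1) ∧
    ¬ Win1En2f exArena exEf false ∧ ¬ Win2En2f exArena exEf false := by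
  refine ⟨?_, ?_, ?_⟩
  · rintro a b ⟨ha, _⟩ hp
    subst ha
    simp [exArena] at hp
  · rintro ⟨c, σ, h⟩
    set π := spoiler c with hπ
    set τ := play exArena σ π false with hτ
    have hfalse : ∀ n ≤ c + 1, τ n = false := by
      intro n hn
      induction n with
      | zero => rfl
      | succ n ih =>
        have hn' : n ≤ c := Nat.lt_succ_iff.mp hn
        have hf : τ n = false := ih (le_trans hn' (Nat.le_succ c))
        have hnp : τ n ∉ exArena.p1 := by
          rw [hf]; simp [exArena]
        have h2 := play_succ_p2 exArena σ π false n hnp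
        rw [show τ (n+1) = π.1 (hist exArena σ π false n).1 (τ n) from h2, hf, hπ]
        show (if false = true then true else if (hist exArena σ (spoiler c) false n).1.length ≤ c then false else true) = false
        rw [hist_len]
        simp [hn']
    have hsum : prefWeight exArena τ (c+1) = -(c+1 : ℤ) := by
      unfold prefWeight
      have : ∀ j ∈ Finset.range (c+1),
          exArena.w (τ j) (τ (j+1)) = -1 := by
        intro j hj
        rw [Finset.mem_range] at hj
        rw [hfalse j (le_of_lt hj), hfalse (j+1) hj]
        simp [exArena]
      rw [Finset.sum_congr rfl this]
      simp
    have hen : ¬ EnObj exArena c τ := by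
      intro he
      have := he (c+1)
      rw [hsum] at this
      omega
    have htrue : ∀ m, c + 2 ≤ m → τ m = true := by
      have h2 : τ (c+2) = true := by
        have hf : τ (c+1) = false := hfalse (c+1) le_rfl
        have hnp : τ (c+1) ∉ exArena.p1 := by rw [hf]; simp [exArena]
        have h2 := play_succ_p2 exArena σ π false (c+1) hnp
        rw [show τ (c+2) = π.1 (hist exArena σ π false (c+1)).1 (τ (c+1)) from h2, hf, hπ]
        show (if false = true then true else if (hist exArena σ (spoiler c) false (c+1)).1.length ≤ c then false else true) = true
        rw [hist_len]
        simp
      intro m hm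
      exact play_true_ge σ π false (c+2) m hm h2
    have hfair : FairPlay exEf τ := by
      intro a b hab hinf N
      obtain ⟨i, hi, hif⟩ := hinf (c+2)
      rw [htrue i hi] at hif
      rw [hab.1] at hif
      exact absurd hif (by simp)
    rcases h π with he | hnf
    · exact hen he
    · exact hnf hfair
  · rintro ⟨π, h⟩
    set σ0 : Strategy exArena := ⟨fun _ _ => true, fun _ _ _ => rfl⟩ with hσ0
    set τ := play exArena σ0 π false with hτ
    by_cases hex : ∃ n, τ n = true
    · obtain ⟨n, hn⟩ := hex
      have habs : ∀ m, n ≤ m → τ m = true := fun m hm =>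
        play_true_ge σ0 π false n m hm hn
      have hstay : ∀ i, n ≤ i → prefWeight exArena τ i = prefWeight exArena τ n := by
        intro i hi
        induction i, hi using Nat.le_induction with
        | base => rfl
        | succ i hni ih =>
          rw [prefWeight_succ, habs i hni, ih]
          simp [exArena]
      have hlow : ∀ i : ℕ, -(i : ℤ) ≤ prefWeight exArena τ i := by
        intro i
        induction i with
        | zero => simp [prefWeight]
        | succ i ih =>
          rw [prefWeight_succ]
          have : (-1 : ℤ) ≤ exArena.w (τ i) (τ (i+1)) := by
            simp only [exArena]
            split <;> omega
          push_cast
          omega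
      have hen : EnObj exArena n τ := by
        intro i
        rcases le_total i n with hin | hni
        · have h1 := hlow i
          have h2 : (i : ℤ) ≤ (n : ℤ) := by exact_mod_cast hin
          linarith
        · rw [hstay i hni]
          have := hlow n
          linarith
      exact h n σ0 (Or.inl hen)
    · push_neg at hex
      have hall : ∀ m, τ m = false := fun m => Bool.eq_false_iff.mpr (hex m)
      have hnf : ¬ FairPlay exEf τ := by
        intro hf
        obtain ⟨i, _, _, hi2⟩ := hf false true ⟨rfl, rfl⟩ (fun N => ⟨N, le_rfl, hall N⟩) 0
        rw [hall (i+1)] at hi2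
        exact absurd hi2 (by simp)
      exact h 0 σ0 (Or.inr hnf)
end

section
/- Let ρ be a play in a weighted game arena and ε > 0. If there exist k ∈ ℕ and a suffix ρ̂ of ρ such that every infix of ρ̂ of length k has average weight at least −ε, then avg(ρ) ≥ −ε. -/
/-!
Common framework: weighted game arenas, plays, strategies, mean-payoff and
energy objectives, strong transition fairness.
-/

open Filter

variable {Q : Type}

/-- If, for some `k` and some suffix of the play `ρ`, every
infix of that suffix of length `k` has average weight at least `-ε`, then
`avg(ρ) ≥ -ε`. -/
theorem avg_ge_of_infix_avg_ge
    (Q : Type) [Fintype Q] (A : Arena Q) (ρ : ℕ → Q)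
    (hplay : ∀ i, A.edge (ρ i) (ρ (i + 1)))
    (ε : ℝ) (hε : 0 < ε)
    (h : ∃ k : ℕ, 0 < k ∧ ∃ N : ℕ, ∀ i, N ≤ i →
      -ε ≤ (∑ j ∈ Finset.range k, (A.w (ρ (i + j)) (ρ (i + j + 1)) : ℝ)) / (k : ℝ)) :
    -ε ≤ mpAvg A ρ := by
  classical
  obtain ⟨k, hk, N, hwin⟩ := h
  -- bound on weights
  obtain ⟨B0, hB0⟩ := Finite.exists_le (fun p : Q × Q => |((A.w p.1 p.2 : ℤ) : ℝ)|)
  set B : ℝ := max B0 0 with hBdef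
  have hBnn : 0 ≤ B := le_max_right _ _
  set wR : ℕ → ℝ := fun j => ((A.w (ρ j) (ρ (j + 1)) : ℤ) : ℝ) with hwR
  have hw : ∀ j, |wR j| ≤ B := fun j =>
    le_trans (hB0 (ρ j, ρ (j + 1))) (le_max_left _ _)
  have hkR : (0 : ℝ) < (k : ℝ) := by exact_mod_cast hk
  -- window bound in product form
  have hwin' : ∀ i, N ≤ i → -ε * (k : ℝ) ≤ ∑ j ∈ Finset.range k, wR (i + j) := by
    intro i hi
    have := hwin i hi
    rw [le_div_iff₀ hkR] at this
    exact this
  set C : ℝ := B * ((N : ℝ) + (k : ℝ)) with hC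
  -- key lower bound on prefix sums
  have key : ∀ i : ℕ, -ε * (i : ℝ) - C ≤ ∑ j ∈ Finset.range i, wR j := by
    intro i
    induction i using Nat.strong_induction_on with
    | _ i ih =>
      by_cases hi : N + k ≤ i
      · have h1 : N ≤ i - k := by omega
        have h2 : i - k < i := by omega
        have hik : i = (i - k) + k := by omega
        have hsum : ∑ j ∈ Finset.range i, wR j
            = ∑ j ∈ Finset.range (i - k), wR j
              + ∑ j ∈ Finset.range k, wR ((i - k) + j) := by
          conv_lhs => rw [hik]
          exact Finset.sum_range_add wR (i - k) k
        have hIH := ih (i - k) h2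
        have hW := hwin' (i - k) h1
        have hcast : ((i - k : ℕ) : ℝ) = (i : ℝ) - (k : ℝ) := by
          have : k ≤ i := by omega
          push_cast [Nat.cast_sub this]
          ring
        rw [hsum]
        rw [hcast] at hIH
        nlinarith [hIH, hW]
      · have habs : |∑ j ∈ Finset.range i, wR j| ≤ B * (i : ℝ) := by
          calc |∑ j ∈ Finset.range i, wR j| ≤ ∑ j ∈ Finset.range i, |wR j| :=
                Finset.abs_sum_le_sum_abs _ _
            _ ≤ ∑ _j ∈ Finset.range i, B := Finset.sum_le_sum fun j _ => hw j
            _ = B * (i : ℝ) := by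
                rw [Finset.sum_const, Finset.card_range, nsmul_eq_mul]; ring
        have h3 : (i : ℝ) ≤ (N : ℝ) + (k : ℝ) := by
          have : i ≤ N + k := by omega
          exact_mod_cast this
        have h4 : -B * (i : ℝ) ≤ ∑ j ∈ Finset.range i, wR j := by
          have := abs_le.mp habs
          linarith [this.1]
        have h5 : (0 : ℝ) ≤ (i : ℝ) := Nat.cast_nonneg i
        nlinarith [hε.le]
  -- identify prefWeight with the sum of wR
  have hpref : ∀ i, (prefWeight A ρ i : ℝ) = ∑ j ∈ Finset.range i, wR j := by
    intro i
    simp [prefWeight, wR]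
  -- boundedness of the average sequence
  have hub : ∀ i : ℕ, 1 ≤ i → (prefWeight A ρ i : ℝ) / (i : ℝ) ≤ B := by
    intro i hi
    have hipos : (0 : ℝ) < (i : ℝ) := by exact_mod_cast hi
    rw [div_le_iff₀ hipos, hpref]
    calc ∑ j ∈ Finset.range i, wR j ≤ |∑ j ∈ Finset.range i, wR j| := le_abs_self _
      _ ≤ ∑ j ∈ Finset.range i, |wR j| := Finset.abs_sum_le_sum_abs _ _
      _ ≤ ∑ _j ∈ Finset.range i, B := Finset.sum_le_sum fun j _ => hw j
      _ = B * (i : ℝ) := by rw [Finset.sum_const, Finset.card_range, nsmul_eq_mul]; ring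
  have hbdd : IsBoundedUnder (· ≤ ·) atTop
      (fun i : ℕ => (prefWeight A ρ i : ℝ) / (i : ℝ)) :=
    ⟨B, eventually_map.2 <| by filter_upwards [eventually_ge_atTop 1] with i hi using hub i hi⟩
  have hcobdd : IsCoboundedUnder (· ≥ ·) atTop
      (fun i : ℕ => (prefWeight A ρ i : ℝ) / (i : ℝ)) :=
    hbdd.isCoboundedUnder_ge
  -- liminf lower bound
  have hmain : ∀ δ : ℝ, 0 < δ → -ε - δ ≤ mpAvg A ρ := by
    intro δ hδ
    refine le_liminf_of_le hcobdd ?_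
    have hCnn : 0 ≤ C := by positivity
    filter_upwards [eventually_ge_atTop (max 1 ⌈C / δ⌉₊)] with i hi
    have hi1 : 1 ≤ i := le_trans (le_max_left _ _) hi
    have hipos : (0 : ℝ) < (i : ℝ) := by exact_mod_cast hi1
    have hiC : C / δ ≤ (i : ℝ) := by
      have : ⌈C / δ⌉₊ ≤ i := le_trans (le_max_right _ _) hi
      exact le_trans (Nat.le_ceil _) (by exact_mod_cast this)
    have hCi : C ≤ δ * (i : ℝ) := by
      rw [div_le_iff₀ hδ] at hiC
      linarith
    have := key i
    rw [le_div_iff₀ hipos, hpref]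
    nlinarith
  by_contra hcon
  push_neg at hcon
  have hδ : 0 < (-ε - mpAvg A ρ) / 2 := by linarith
  have := hmain _ hδ
  linarith
end

section
/- Let (G,E_f,En^f) be a 1-fair energy game with G=(Q,E,w), |Q| = n and all weights satisfying |w(e)| ≤ W, and let q be a node. If there exists a player-2 strategy π such that for every player-1 strategy σ the play from q conforming with σ and π is not in En_{nW}^f (i.e., the play is unfair or its prefix weight drops below −nW at some point), then q ∈ Win_2; i.e., there exists a player-2 strategy π^ext such that for every c ∈ ℕ and every player-1 strategy σ, the play from q conforming with σ and π^ext is not in En_c^f. -/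
/-!
Common framework: weighted game arenas, plays, strategies, mean-payoff and
energy objectives, strong transition fairness.
-/

open Filter

variable {Q : Type}

namespace Onefair

variable {Q : Type}

/-- Weight of a finite path given as a list of nodes. -/
def pw (A : Arena Q) : List Q → ℤ
  | [] => 0
  | [_] => 0
  | x :: y :: l => A.w x y + pw A (y :: l)

@[simp] lemma pw_nil (A : Arena Q) : pw A [] = 0 := rfl
@[simp] lemma pw_single (A : Arena Q) (x : Q) : pw A [x] = 0 := rfl
lemma pw_cons₂ (A : Arena Q) (x y : Q) (l : List Q) :
    pw A (x :: y :: l) = A.w x y + pw A (y :: l) := rfl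

lemma pw_append_singleton (A : Arena Q) (d x : Q) :
    ∀ (l : List Q), l ≠ [] → pw A (l ++ [x]) = pw A l + A.w (l.getD (l.length - 1) d) x
  | [], h => absurd rfl h
  | [a], _ => by simp [pw_cons₂]
  | a :: b :: l, _ => by
    have ih := pw_append_singleton A d x (b :: l) (by simp)
    simp only [List.cons_append, pw_cons₂] at *
    rw [ih]
    have : (a :: b :: l).length - 1 = (b :: l).length - 1 + 1 := by
      simp [List.length_cons]
    rw [this]
    simp [List.getD_cons_succ]
    ring

lemma pw_take_drop (A : Arena Q) :
    ∀ (l : List Q) (i : ℕ), pw A (l.take (i + 1)) + pw A (l.drop i) = pw A l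
  | [], _ => by simp
  | _ :: _, 0 => by simp
  | [a], (i+1) => by simp
  | a :: b :: l, (i+1) => by
    have ih := pw_take_drop A (b :: l) i
    have h1 : (a :: b :: l).take (i + 1 + 1) = a :: (b :: l).take (i + 1) :=
      List.take_succ_cons ..
    have h2 : (b :: l).take (i + 1) = b :: l.take i := List.take_succ_cons ..
    have h3 : (a :: b :: l).drop (i + 1) = (b :: l).drop i := List.drop_succ_cons ..
    rw [h1, h2, h3, pw_cons₂, ← h2, pw_cons₂]
    omega

end Onefair
namespace Onefair2
open Onefair

variable {Q : Type}

/-- Helper: `getD` of a `take`-prefix. -/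
lemma getD_take (l : List Q) (i m : ℕ) (d : Q) (h : i < m) :
    (l.take m).getD i d = l.getD i d := by
  simp [List.getD_eq_getElem?_getD, List.getElem?_take_of_lt h]

lemma take_succ_getD (l : List Q) (n : ℕ) (d : Q) (h : n < l.length) :
    l.take (n+1) = l.take n ++ [l.getD n d] := by
  rw [List.take_succ]
  simp [List.getElem?_eq_getElem h, List.getD_eq_getElem l _ h]

/-- Eligibility of a cut position `j` in the current virtual history `L`:
same node as the end, negative prefix, and a negative cycle back to `j`. -/
def elig (A : Arena Q) (d : Q) (L : List Q) (j : ℕ) : Prop :=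
  j + 1 < L.length ∧ L.getD j d = L.getD (L.length - 1) d ∧
    pw A (L.take (j + 1)) < 0 ∧ pw A (L.drop j) < 0

open Classical in
/-- Cut the virtual history at an eligible position (if any). -/
noncomputable def cut (A : Arena Q) (d : Q) (L : List Q) : List Q :=
  if h : ∃ j, elig A d L j then L.take (Classical.choose h + 1) else L

open Classical in
/-- One machine step: append the new node, then cut if possible. -/
noncomputable def mstep (A : Arena Q) (d : Q) (ρ : List Q) (x : Q) : List Q :=
  if ρ = [] then [x] else cut A d (ρ ++ [x])

/-- The machine state reached after processing a list of nodes. -/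
noncomputable def mach (A : Arena Q) (d : Q) (l : List Q) : List Q :=
  l.foldl (mstep A d) []

lemma mach_append (A : Arena Q) (d : Q) (l : List Q) (x : Q) :
    mach A d (l ++ [x]) = mstep A d (mach A d l) x := by
  simp [mach, List.foldl_append]

/-- The extended strategy: play `π` on the virtual history computed by the machine. -/
noncomputable def ext (A : Arena Q) (d : Q) (π : Strategy A) : Strategy A :=
  ⟨fun H y => π.1 (mach A d (H ++ [y])).dropLast y, fun H y => π.2 _ y⟩

/-- Invariant on virtual histories. -/
structure Inv (A : Arena Q) (π : Strategy A) (d : Q) (ρ : List Q) (x : Q) : Prop where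
  ne : ρ ≠ []
  head : ρ.getD 0 d = d
  last : ρ.getD (ρ.length - 1) d = x
  edge : ∀ i, i + 1 < ρ.length → A.edge (ρ.getD i d) (ρ.getD (i + 1) d)
  pic : ∀ i, i + 1 < ρ.length → ρ.getD i d ∉ A.p1 →
      ρ.getD (i + 1) d = π.1 (ρ.take i) (ρ.getD i d)
  nopat : ∀ i j, i < j → j + 1 ≤ ρ.length → ρ.getD i d = ρ.getD j d →
      pw A (ρ.take (i + 1)) < 0 → pw A (ρ.take (i + 1)) ≤ pw A (ρ.take (j + 1))

lemma inv_take {A : Arena Q} {π : Strategy A} {d : Q} {ρ : List Q} {x : Q}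
    (h : Inv A π d ρ x) (k : ℕ) (hk : k + 1 ≤ ρ.length) :
    Inv A π d (ρ.take (k + 1)) (ρ.getD k d) := by
  have hlen : (ρ.take (k + 1)).length = k + 1 := by
    rw [List.length_take]; omega
  constructor
  · intro hc; rw [hc] at hlen; simp at hlen
  · rw [getD_take _ _ _ _ (by omega)]; exact h.head
  · rw [hlen]; simp only [Nat.add_sub_cancel]
    exact getD_take _ _ _ _ (by omega)
  · intro i hi
    rw [hlen] at hi
    rw [getD_take _ _ _ _ (by omega), getD_take _ _ _ _ (by omega)]
    exact h.edge i (by omega)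
  · intro i hi hp
    rw [hlen] at hi
    rw [getD_take _ _ _ _ (by omega)] at hp ⊢
    rw [getD_take _ _ _ _ (by omega), List.take_take, min_eq_left (by omega : i ≤ k+1)]
    exact h.pic i (by omega) hp
  · intro i j hij hj hnode hneg
    rw [hlen] at hj
    rw [getD_take _ _ _ _ (by omega), getD_take _ _ _ _ (by omega)] at hnode
    rw [List.take_take, min_eq_left (by omega : i + 1 ≤ k + 1)] at hneg ⊢
    rw [List.take_take, min_eq_left (by omega : j + 1 ≤ k + 1)]
    exact h.nopat i j hij (by omega) hnode hneg

end Onefair2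
namespace Onefair2
open Onefair

variable {Q : Type}

lemma mstep_spec (A : Arena Q) (π : Strategy A) (d : Q) (ρ : List Q) (x y : Q)
    (h : Inv A π d ρ x) (he : A.edge x y) (hp : x ∉ A.p1 → y = π.1 ρ.dropLast x) :
    Inv A π d (mstep A d ρ y) y ∧
    ((¬ ∃ j, elig A d (ρ ++ [y]) j) →
        mstep A d ρ y = ρ ++ [y] ∧ pw A (mstep A d ρ y) = pw A ρ + A.w x y) ∧
    ((∃ j, elig A d (ρ ++ [y]) j) →
        pw A (mstep A d ρ y) < 0 ∧ pw A ρ + A.w x y + 1 ≤ pw A (mstep A d ρ y)) := by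
  have hne := h.ne
  obtain ⟨L, hL⟩ : ∃ L, L = ρ ++ [y] := ⟨_, rfl⟩
  have hlenL : L.length = ρ.length + 1 := by rw [hL]; simp
  have hρpos : 1 ≤ ρ.length := List.length_pos_iff.2 hne
  have hgetDy : L.getD (L.length - 1) d = y := by
    rw [hlenL, hL]
    simp only [Nat.add_sub_cancel]
    rw [List.getD_append_right _ _ _ _ (le_refl _)]
    simp
  have hstableD : ∀ i, i < ρ.length → L.getD i d = ρ.getD i d := by
    intro i hi; rw [hL]; exact List.getD_append _ _ _ _ hi
  have hstableT : ∀ k, k ≤ ρ.length → L.take k = ρ.take k := by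
    intro k hk; rw [hL]; exact List.take_append_of_le_length hk
  have hpwL : pw A L = pw A ρ + A.w x y := by
    rw [hL, pw_append_singleton A d y ρ hne, h.last]
  have hmstep : mstep A d ρ y = cut A d L := by
    rw [mstep, if_neg hne, hL]
  rw [← hL]
  by_cases hex : ∃ j, elig A d L j
  · -- cut case
    have hj : elig A d L (Classical.choose hex) := Classical.choose_spec hex
    have hcut : cut A d L = L.take (Classical.choose hex + 1) := by
      rw [cut, dif_pos hex]
    generalize hjdef : Classical.choose hex = j at hj hcut
    have hjρ : j + 1 ≤ ρ.length := by have := hj.1; omega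
    have hjlt : j < ρ.length := by omega
    have htake : L.take (j + 1) = ρ.take (j + 1) := hstableT _ hjρ
    have hnode : ρ.getD j d = y := by
      have h2 := hj.2.1
      rwa [hgetDy, hstableD j hjlt] at h2
    have hInv : Inv A π d (mstep A d ρ y) y := by
      rw [hmstep, hcut, htake, ← hnode]
      exact inv_take h j hjρ
    refine ⟨hInv, fun hc => absurd hex hc, fun _ => ?_⟩
    have hpwtake : pw A (L.take (j + 1)) < 0 := hj.2.2.1
    have hsplit := pw_take_drop A L j
    have hdropneg : pw A (L.drop j) < 0 := hj.2.2.2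
    rw [hmstep, hcut]
    refine ⟨hpwtake, ?_⟩
    rw [← hpwL]
    omega
  · -- no-cut case
    have hcut : cut A d L = L := by rw [cut, dif_neg hex]
    have heq : mstep A d ρ y = L := by rw [hmstep, hcut]
    have hInv : Inv A π d L y := by
      constructor
      · rw [hL]; simp
      · rw [hstableD 0 (by omega)]; exact h.head
      · exact hgetDy
      · intro i hi
        rw [hlenL] at hi
        by_cases hi' : i + 1 < ρ.length
        · rw [hstableD i (by omega), hstableD (i+1) hi']
          exact h.edge i hi'
        · have hieq : i = ρ.length - 1 := by omega
          have hx : L.getD i d = x := by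
            rw [hstableD i (by omega), hieq]; exact h.last
          have hy' : L.getD (i+1) d = y := by
            have h2 : i + 1 = L.length - 1 := by omega
            rw [h2]; exact hgetDy
          rw [hx, hy']
          exact he
      · intro i hi hmem
        rw [hlenL] at hi
        by_cases hi' : i + 1 < ρ.length
        · rw [hstableD i (by omega)] at hmem ⊢
          rw [hstableD (i+1) hi', hstableT i (by omega)]
          exact h.pic i hi' hmem
        · have hieq : i = ρ.length - 1 := by omega
          have hx : L.getD i d = x := by
            rw [hstableD i (by omega), hieq]; exact h.last
          have hy' : L.getD (i+1) d = y := by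
            have h2 : i + 1 = L.length - 1 := by omega
            rw [h2]; exact hgetDy
          have ht : L.take i = ρ.dropLast := by
            rw [hstableT i (by omega), List.dropLast_eq_take, hieq]
          rw [hx] at hmem
          rw [hy', hx, ht]
          exact hp hmem
      · intro i j hij hjlen hnode hneg
        rw [hlenL] at hjlen
        by_cases hj' : j + 1 ≤ ρ.length
        · rw [hstableD i (by omega), hstableD j (by omega)] at hnode
          rw [hstableT (i+1) (by omega)] at hneg ⊢
          rw [hstableT (j+1) hj']
          exact h.nopat i j hij hj' hnode hneg
        · have hjeq : j = ρ.length := by omega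
          have hj1 : j = L.length - 1 := by omega
          by_contra hlt
          push_neg at hlt
          have hiρ : i < ρ.length := by omega
          apply hex
          refine ⟨i, by omega, by rw [hj1] at hnode; exact hnode, hneg, ?_⟩
          have hsplit := pw_take_drop A L i
          have hfull : L.take (j + 1) = L := by
            rw [hjeq, ← hlenL]; simp
          rw [hfull] at hlt
          omega
    refine ⟨by rwa [heq], fun _ => ⟨heq, by rw [heq, hpwL]⟩, fun hc => absurd hc hex⟩

end Onefair2
namespace Onefair2
open Onefair

variable {Q : Type}

/-- Running minimum of prefix weights. -/
def runMin (g : ℕ → ℤ) : ℕ → ℤ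
  | 0 => g 0
  | k + 1 => min (runMin g k) (g (k + 1))

lemma runMin_le (g : ℕ → ℤ) : ∀ k j, j ≤ k → runMin g k ≤ g j
  | 0, j, h => by
    have : j = 0 := by omega
    simp [this, runMin]
  | k + 1, j, h => by
    rcases Nat.lt_or_ge j (k + 1) with h' | h'
    · exact le_trans (min_le_left _ _) (runMin_le g k j (by omega))
    · have : j = k + 1 := by omega
      rw [this, runMin]
      exact min_le_right _ _

lemma runMin_exists (g : ℕ → ℤ) : ∀ k, ∃ j₀, j₀ ≤ k ∧ runMin g k = g j₀
  | 0 => ⟨0, le_refl _, rfl⟩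
  | k + 1 => by
    obtain ⟨j₀, hj₀, hje⟩ := runMin_exists g k
    rcases le_or_gt (runMin g k) (g (k + 1)) with hc | hc
    · exact ⟨j₀, by omega, by rw [runMin, min_eq_left hc]; exact hje⟩
    · exact ⟨k + 1, le_refl _, by rw [runMin, min_eq_right (le_of_lt hc)]⟩

open Classical in
/-- Strict record-low positions among the first `k+1` prefix weights. -/
noncomputable def recSet (g : ℕ → ℤ) (k : ℕ) : Finset ℕ :=
  (Finset.range (k + 1)).filter (fun p => 0 < p ∧ ∀ j < p, g p < g j)

lemma recSet_mem {g : ℕ → ℤ} {k p : ℕ} (h : p ∈ recSet g k) :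
    p ≤ k ∧ 0 < p ∧ ∀ j < p, g p < g j := by
  rw [recSet, Finset.mem_filter, Finset.mem_range] at h
  exact ⟨by omega, h.2⟩

lemma recSet_succ_not {g : ℕ → ℤ} {k : ℕ} (h : ¬ g (k + 1) < runMin g k) :
    recSet g (k + 1) = recSet g k := by
  apply Finset.ext
  intro p
  rw [recSet, recSet, Finset.mem_filter, Finset.mem_filter, Finset.mem_range,
    Finset.mem_range]
  constructor
  · rintro ⟨hp, hpos, hrec⟩
    refine ⟨?_, hpos, hrec⟩
    rcases Nat.lt_or_ge p (k + 1) with h' | h'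
    · omega
    · exfalso
      have hpk : p = k + 1 := by omega
      subst hpk
      -- g (k+1) < g j for all j ≤ k, so g (k+1) < runMin g k : contradiction
      apply h
      obtain ⟨j₀, hj₀, hje⟩ := runMin_exists g k
      rw [hje]
      exact hrec j₀ (by omega)
  · rintro ⟨hp, hpos, hrec⟩
    exact ⟨by omega, hpos, hrec⟩

lemma recSet_succ_yes {g : ℕ → ℤ} {k : ℕ} (h : g (k + 1) < runMin g k) :
    recSet g (k + 1) = insert (k + 1) (recSet g k) := by
  apply Finset.ext
  intro p
  rw [Finset.mem_insert, recSet, recSet, Finset.mem_filter, Finset.mem_filter,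
    Finset.mem_range, Finset.mem_range]
  constructor
  · rintro ⟨hp, hpos, hrec⟩
    rcases Nat.lt_or_ge p (k + 1) with h' | h'
    · exact Or.inr ⟨h', hpos, hrec⟩
    · exact Or.inl (by omega)
  · rintro (hp | ⟨hp, hpos, hrec⟩)
    · subst hp
      refine ⟨by omega, by omega, fun j hj => lt_of_lt_of_le h (runMin_le g k j (by omega))⟩
    · exact ⟨by omega, hpos, hrec⟩

lemma runMin_ge (g : ℕ → ℤ) (W : ℤ) (hWpos : 0 ≤ W) (len : ℕ)
    (hg0 : g 0 = 0) (hstep : ∀ k, k + 1 < len → g k - W ≤ g (k + 1)) :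
    ∀ k, k < len → -(W * (recSet g k).card) ≤ runMin g k := by
  intro k
  induction k with
  | zero =>
    intro _
    rw [runMin, hg0]
    have : (0:ℤ) ≤ W * (recSet g 0).card := by positivity
    omega
  | succ k ih =>
    intro hlen
    have ihk := ih (by omega)
    by_cases hlt : g (k + 1) < runMin g k
    · rw [recSet_succ_yes hlt]
      have hnot : k + 1 ∉ recSet g k := by
        intro hm
        exact absurd (recSet_mem hm).1 (by omega)
      rw [Finset.card_insert_of_notMem hnot]
      have h1 : g k - W ≤ g (k + 1) := hstep k hlen
      have h2 : runMin g k ≤ g k := runMin_le g k k (le_refl _)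
      have h3 : runMin g (k + 1) = g (k + 1) := by
        rw [runMin, min_eq_right (le_of_lt hlt)]
      rw [h3]
      push_cast
      nlinarith
    · rw [recSet_succ_not hlt]
      have h3 : runMin g (k + 1) = runMin g k := by
        rw [runMin, min_eq_left (by omega)]
      rw [h3]
      exact ihk

lemma pw_take_one (A : Arena Q) (ρ : List Q) (h : ρ ≠ []) : pw A (ρ.take 1) = 0 := by
  cases ρ with
  | nil => exact absurd rfl h
  | cons a l => simp

/-- Main combinatorial bound: a path without "cut patterns" has all prefix
weights at least `-|Q|·W`. -/
theorem pw_take_bound [Fintype Q] (A : Arena Q) (W : ℕ)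
    (hW : ∀ a b, A.edge a b → (A.w a b).natAbs ≤ W) (π : Strategy A) (d : Q)
    (ρ : List Q) (x : Q) (h : Inv A π d ρ x) :
    ∀ k, k < ρ.length → -((Fintype.card Q : ℤ) * W) ≤ pw A (ρ.take (k + 1)) := by
  classical
  intro k hk
  set g : ℕ → ℤ := fun k => pw A (ρ.take (k + 1)) with hg
  have hg0 : g 0 = 0 := pw_take_one A ρ h.ne
  have hstep : ∀ k, k + 1 < ρ.length → g k - W ≤ g (k + 1) := by
    intro k hk1
    have hk' : k < ρ.length := by omega
    have htake : ρ.take (k + 2) = ρ.take (k + 1) ++ [ρ.getD (k + 1) d] :=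
      take_succ_getD ρ (k + 1) d hk1
    have hlt : (ρ.take (k + 1)).length = k + 1 := by
      rw [List.length_take]; omega
    have hne : ρ.take (k + 1) ≠ [] := by
      intro hcon
      rw [hcon] at hlt
      simp at hlt
    have hlast : (ρ.take (k + 1)).getD ((ρ.take (k + 1)).length - 1) d = ρ.getD k d := by
      rw [List.length_take, min_eq_left (by omega : k + 1 ≤ ρ.length)]
      simp only [Nat.add_sub_cancel]
      exact getD_take ρ k (k + 1) d (by omega)
    have : g (k + 1) = g k + A.w (ρ.getD k d) (ρ.getD (k + 1) d) := by
      show pw A (ρ.take (k + 1 + 1)) = _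
      rw [htake, pw_append_singleton A d _ _ hne, hlast]
    rw [this]
    have hedge := h.edge k hk1
    have hnat := hW _ _ hedge
    omega
  have hbound := runMin_ge g W (by positivity) ρ.length hg0 hstep k hk
  have hcard : ((recSet g k).card : ℤ) ≤ (Fintype.card Q : ℤ) := by
    have : (recSet g k).card ≤ Fintype.card Q := by
      have hinj : Set.InjOn (fun p => ρ.getD p d) (recSet g k) := by
        intro p hp p' hp' hpe
        by_contra hne
        have m := recSet_mem (Finset.mem_coe.1 hp)
        have m' := recSet_mem (Finset.mem_coe.1 hp')
        rcases Nat.lt_or_ge p p' with hlt | hge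
        · have hneg : g p < 0 := by
            have := m.2.2 0 m.2.1
            rwa [hg0] at this
          have := h.nopat p p' hlt (by omega) hpe hneg
          have h2 := m'.2.2 p hlt
          change pw A (ρ.take (p + 1)) ≤ pw A (ρ.take (p' + 1)) at this
          change g p' < g p at h2
          change g p ≤ g p' at this
          omega
        · have hlt : p' < p := by omega
          have hneg : g p' < 0 := by
            have := m'.2.2 0 m'.2.1
            rwa [hg0] at this
          have := h.nopat p' p hlt (by omega) hpe.symm hneg
          have h2 := m.2.2 p' hlt
          change g p' ≤ g p at this
          change g p < g p' at h2
          omega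
      calc (recSet g k).card = ((recSet g k).image (fun p => ρ.getD p d)).card := by
            rw [Finset.card_image_of_injOn hinj]
        _ ≤ (Finset.univ : Finset Q).card := Finset.card_le_card (Finset.subset_univ _)
        _ = Fintype.card Q := rfl
    exact_mod_cast this
  have hmin : runMin g k ≤ g k := runMin_le g k k (le_refl _)
  have hWQ : -((Fintype.card Q : ℤ) * W) ≤ -(W * (recSet g k).card) := by
    have : (W : ℤ) * (recSet g k).card ≤ (Fintype.card Q : ℤ) * W := by
      nlinarith [hcard, (by positivity : (0:ℤ) ≤ (W:ℤ))]
    omega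
  calc -((Fintype.card Q : ℤ) * W) ≤ -(W * (recSet g k).card) := hWQ
    _ ≤ runMin g k := hbound
    _ ≤ g k := hmin

end Onefair2
namespace Onefair2
open Onefair

variable {Q : Type}

lemma hist_fst_succ (A : Arena Q) (σ π' : Strategy A) (q : Q) (n : ℕ) :
    (hist A σ π' q (n + 1)).1 = (hist A σ π' q n).1 ++ [play A σ π' q n] := rfl

@[simp] lemma play_zero (A : Arena Q) (σ π' : Strategy A) (q : Q) :
    play A σ π' q 0 = q := rfl

open Classical in
lemma play_succ (A : Arena Q) (σ π' : Strategy A) (q : Q) (n : ℕ) :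
    play A σ π' q (n + 1) =
      if play A σ π' q n ∈ A.p1 then σ.1 (hist A σ π' q n).1 (play A σ π' q n)
      else π'.1 (hist A σ π' q n).1 (play A σ π' q n) := rfl

lemma play_edge (A : Arena Q) (σ π' : Strategy A) (q : Q) (n : ℕ) :
    A.edge (play A σ π' q n) (play A σ π' q (n + 1)) := by
  rcases Classical.em (play A σ π' q n ∈ A.p1) with h | h
  · rw [play_succ, if_pos h]; exact σ.2 _ _
  · rw [play_succ, if_neg h]; exact π'.2 _ _

/-- Machine state along the real play. -/
noncomputable def Sst (A : Arena Q) (q : Q) (π σ : Strategy A) (t : ℕ) : List Q :=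
  mach A q ((hist A σ (ext A q π) q t).1 ++ [play A σ (ext A q π) q t])

lemma Sst_zero (A : Arena Q) (q : Q) (π σ : Strategy A) : Sst A q π σ 0 = [q] := by
  show mach A q ([] ++ [q]) = [q]
  rw [List.nil_append, mach]
  show mstep A q [] q = [q]
  rw [mstep, if_pos rfl]

lemma Sst_succ (A : Arena Q) (q : Q) (π σ : Strategy A) (t : ℕ) :
    Sst A q π σ (t + 1) = mstep A q (Sst A q π σ t) (play A σ (ext A q π) q (t + 1)) := by
  show mach A q ((hist A σ (ext A q π) q (t+1)).1 ++ [play A σ (ext A q π) q (t+1)]) = _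
  rw [hist_fst_succ]
  exact mach_append A q _ _

lemma play_p2 (A : Arena Q) (q : Q) (π σ : Strategy A) (t : ℕ)
    (h : play A σ (ext A q π) q t ∉ A.p1) :
    play A σ (ext A q π) q (t + 1) =
      π.1 (Sst A q π σ t).dropLast (play A σ (ext A q π) q t) := by
  rw [play_succ, if_neg h]
  rfl

lemma inv_all (A : Arena Q) (q : Q) (π σ : Strategy A) (t : ℕ) :
    Inv A π q (Sst A q π σ t) (play A σ (ext A q π) q t) := by
  induction t with
  | zero =>
    rw [Sst_zero]
    refine ⟨by simp, by simp, by simp, ?_, ?_, ?_⟩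
    · intro i hi; simp at hi
    · intro i hi; simp at hi
    · intro i j hij hj _ _; simp at hj; omega
  | succ t ih =>
    rw [Sst_succ]
    exact (mstep_spec A π q (Sst A q π σ t) _ _ ih (play_edge A σ _ q t)
      (play_p2 A q π σ t)).1

lemma prefW_succ (A : Arena Q) (f : ℕ → Q) (t : ℕ) :
    prefWeight A f (t + 1) = prefWeight A f t + A.w (f t) (f (t + 1)) :=
  Finset.sum_range_succ _ _

/-- The "banked" difference between real and virtual weight. -/
noncomputable def Dt (A : Arena Q) (q : Q) (π σ : Strategy A) (t : ℕ) : ℤ :=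
  prefWeight A (play A σ (ext A q π) q) t - pw A (Sst A q π σ t)

/-- Whether a cut happens at step `t → t+1`. -/
def cutp (A : Arena Q) (q : Q) (π σ : Strategy A) (t : ℕ) : Prop :=
  ∃ j, elig A q (Sst A q π σ t ++ [play A σ (ext A q π) q (t + 1)]) j

lemma Dt_zero (A : Arena Q) (q : Q) (π σ : Strategy A) : Dt A q π σ 0 = 0 := by
  rw [Dt, Sst_zero]
  simp [prefWeight]

lemma Dt_succ_nocut (A : Arena Q) (q : Q) (π σ : Strategy A) (t : ℕ)
    (h : ¬ cutp A q π σ t) : Dt A q π σ (t + 1) = Dt A q π σ t := by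
  have hs := (mstep_spec A π q (Sst A q π σ t) _ _ (inv_all A q π σ t)
    (play_edge A σ _ q t) (play_p2 A q π σ t)).2.1 h
  rw [Dt, Dt, Sst_succ, hs.2, prefW_succ]
  ring

lemma Dt_succ_cut (A : Arena Q) (q : Q) (π σ : Strategy A) (t : ℕ)
    (h : cutp A q π σ t) :
    Dt A q π σ (t + 1) + 1 ≤ Dt A q π σ t ∧ pw A (Sst A q π σ (t + 1)) < 0 := by
  have hs := (mstep_spec A π q (Sst A q π σ t) _ _ (inv_all A q π σ t)
    (play_edge A σ _ q t) (play_p2 A q π σ t)).2.2 h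
  constructor
  · rw [Dt, Dt, Sst_succ, prefW_succ]
    have := hs.2
    omega
  · rw [Sst_succ]; exact hs.1

lemma Dt_mono (A : Arena Q) (q : Q) (π σ : Strategy A) :
    ∀ s t, s ≤ t → Dt A q π σ t ≤ Dt A q π σ s := by
  intro s t h
  induction t with
  | zero => have : s = 0 := by omega
            rw [this]
  | succ t ih =>
    rcases Nat.lt_or_ge s (t + 1) with h' | h'
    · have hst := ih (by omega)
      rcases Classical.em (cutp A q π σ t) with hc | hc
      · have := (Dt_succ_cut A q π σ t hc).1; omega
      · rw [Dt_succ_nocut A q π σ t hc]; exact hst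
    · have : s = t + 1 := by omega
      rw [this]

/-- Case A: infinitely many cuts defeat every initial credit. -/
lemma caseA (A : Arena Q) (q : Q) (π σ : Strategy A)
    (hinf : ∀ T, ∃ t, T ≤ t ∧ cutp A q π σ t) (c : ℕ) :
    ¬ EnObj A c (play A σ (ext A q π) q) := by
  have key : ∀ k : ℕ, ∃ t, Dt A q π σ t ≤ -(k + 1) ∧ pw A (Sst A q π σ t) < 0 := by
    intro k
    induction k with
    | zero =>
      obtain ⟨t, _, hc⟩ := hinf 0
      obtain ⟨h1, h2⟩ := Dt_succ_cut A q π σ t hc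
      have h0 : Dt A q π σ t ≤ 0 := by
        have := Dt_mono A q π σ 0 t (by omega)
        rw [Dt_zero] at this
        exact this
      exact ⟨t + 1, by omega, h2⟩
    | succ k ih =>
      obtain ⟨t, hD, _⟩ := ih
      obtain ⟨t', ht', hc⟩ := hinf t
      obtain ⟨h1, h2⟩ := Dt_succ_cut A q π σ t' hc
      have := Dt_mono A q π σ t t' ht'
      exact ⟨t' + 1, by push_cast at *; omega, h2⟩
  intro hEn
  obtain ⟨t, hD, hpw⟩ := key c
  have hob := hEn t
  have : prefWeight A (play A σ (ext A q π) q) t =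
      Dt A q π σ t + pw A (Sst A q π σ t) := by rw [Dt]; ring
  rw [this] at hob
  push_cast at hD hob
  omega

end Onefair2
namespace Onefair2
open Onefair

variable {Q : Type}

open Classical in
/-- A player-1 strategy following a prescribed path. -/
noncomputable def copyStrat (A : Arena Q) (f : ℕ → Q)
    (hedge : ∀ i, A.edge (f i) (f (i + 1))) : Strategy A :=
  ⟨fun H y => if f H.length = y then f (H.length + 1)
      else Classical.choose (A.succ_exists y), by
    intro H y
    dsimp only
    by_cases h : f H.length = y
    · rw [if_pos h, ← h]; exact hedge H.length
    · rw [if_neg h]; exact Classical.choose_spec (A.succ_exists y)⟩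

open Classical in
lemma play_copy (A : Arena Q) (π : Strategy A) (q : Q) (f : ℕ → Q) (hf0 : f 0 = q)
    (hedge : ∀ i, A.edge (f i) (f (i + 1)))
    (hpic : ∀ n, f n ∉ A.p1 → f (n + 1) = π.1 ((List.range n).map f) (f n)) :
    ∃ σ' : Strategy A, ∀ n, play A σ' π q n = f n := by
  refine ⟨copyStrat A f hedge, ?_⟩
  have key : ∀ n, (hist A (copyStrat A f hedge) π q n).1 = (List.range n).map f ∧
      (hist A (copyStrat A f hedge) π q n).2 = f n := by
    intro n
    induction n with
    | zero => exact ⟨rfl, hf0.symm⟩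
    | succ n ih =>
      constructor
      · show (hist A (copyStrat A f hedge) π q n).1 ++
            [(hist A (copyStrat A f hedge) π q n).2] = _
        rw [ih.1, ih.2, List.range_succ, List.map_append]
        rfl
      · show (if (hist A (copyStrat A f hedge) π q n).2 ∈ A.p1 then
            (copyStrat A f hedge).1 (hist A (copyStrat A f hedge) π q n).1
              (hist A (copyStrat A f hedge) π q n).2
          else π.1 (hist A (copyStrat A f hedge) π q n).1
              (hist A (copyStrat A f hedge) π q n).2) = f (n + 1)
        rw [ih.1, ih.2]
        by_cases hm : f n ∈ A.p1
        · rw [if_pos hm]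
          show (if f ((List.range n).map f).length = f n then
              f (((List.range n).map f).length + 1) else _) = f (n + 1)
          have hlen : ((List.range n).map f).length = n := by simp
          rw [hlen, if_pos rfl]
        · rw [if_neg hm]
          exact (hpic n hm).symm
  intro n
  show (hist A (copyStrat A f hedge) π q n).2 = f n
  exact (key n).2

lemma caseB [Fintype Q] (A : Arena Q) (W : ℕ)
    (hW : ∀ a b, A.edge a b → (A.w a b).natAbs ≤ W) (Ef : Q → Q → Prop)
    (q : Q) (π σ : Strategy A) (T₀ : ℕ)
    (hnc : ∀ t, T₀ ≤ t → ¬ cutp A q π σ t)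
    (hfair : FairPlay Ef (play A σ (ext A q π) q)) :
    ∃ σ' : Strategy A, EnObj A (Fintype.card Q * W) (play A σ' π q) ∧
      FairPlay Ef (play A σ' π q) := by
  -- append-only after T₀
  have happ : ∀ t, T₀ ≤ t → Sst A q π σ (t + 1) =
      Sst A q π σ t ++ [play A σ (ext A q π) q (t + 1)] := by
    intro t ht
    have h2 := (mstep_spec A π q (Sst A q π σ t) _ _ (inv_all A q π σ t)
      (play_edge A σ _ q t) (play_p2 A q π σ t)).2.1 (hnc t ht)
    rw [Sst_succ]
    exact h2.1
  have hm1 : 1 ≤ (Sst A q π σ T₀).length :=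
    List.length_pos_iff.2 (inv_all A q π σ T₀).ne
  have hlen : ∀ s, (Sst A q π σ (T₀ + s)).length = (Sst A q π σ T₀).length + s := by
    intro s
    induction s with
    | zero => rfl
    | succ s ih =>
      rw [show T₀ + (s + 1) = (T₀ + s) + 1 from rfl, happ _ (by omega)]
      simp [ih]
      omega
  have hstabD : ∀ s s', s ≤ s' → ∀ i, i < (Sst A q π σ T₀).length + s →
      (Sst A q π σ (T₀ + s')).getD i q = (Sst A q π σ (T₀ + s)).getD i q := by
    intro s s' hss
    induction s' with
    | zero =>
      have hz : s = 0 := by omega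
      subst hz
      intro i _; rfl
    | succ s' ih =>
      intro i hi
      rcases Nat.lt_or_ge s (s' + 1) with h' | h'
      · rw [show T₀ + (s' + 1) = (T₀ + s') + 1 from rfl, happ _ (by omega),
          List.getD_append _ _ _ _ (by rw [hlen]; omega)]
        exact ih (by omega) i hi
      · have hz : s = s' + 1 := by omega
        subst hz
        rfl
  have hstabT : ∀ s s', s ≤ s' → ∀ k, k ≤ (Sst A q π σ T₀).length + s →
      (Sst A q π σ (T₀ + s')).take k = (Sst A q π σ (T₀ + s)).take k := by
    intro s s' hss
    induction s' with
    | zero =>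
      have hz : s = 0 := by omega
      subst hz
      intro k _; rfl
    | succ s' ih =>
      intro k hk
      rcases Nat.lt_or_ge s (s' + 1) with h' | h'
      · rw [show T₀ + (s' + 1) = (T₀ + s') + 1 from rfl, happ _ (by omega),
          List.take_append_of_le_length (by rw [hlen]; omega)]
        exact ih (by omega) k hk
      · have hz : s = s' + 1 := by omega
        subst hz
        rfl
  -- the limit play
  obtain ⟨f, hfdef⟩ : ∃ f : ℕ → Q, ∀ i, f i = (Sst A q π σ (T₀ + i)).getD i q :=
    ⟨_, fun _ => rfl⟩
  have hfeq : ∀ i s, i < (Sst A q π σ T₀).length + s →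
      f i = (Sst A q π σ (T₀ + s)).getD i q := by
    intro i s hi
    rw [hfdef]
    rcases Nat.le_total s i with h' | h'
    · exact hstabD s i h' i hi
    · exact (hstabD i s h' i (by omega)).symm
  have hf0 : f 0 = q := by
    rw [hfdef]
    exact (inv_all A q π σ (T₀ + 0)).head
  have hftail : ∀ s, f ((Sst A q π σ T₀).length - 1 + s) = play A σ (ext A q π) q (T₀ + s) := by
    intro s
    rw [hfeq ((Sst A q π σ T₀).length - 1 + s) s (by omega)]
    have hl := (inv_all A q π σ (T₀ + s)).last
    rw [show (Sst A q π σ T₀).length - 1 + s = (Sst A q π σ (T₀ + s)).length - 1 by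
      rw [hlen]; omega]
    exact hl
  have hfedge : ∀ i, A.edge (f i) (f (i + 1)) := by
    intro i
    have he := (inv_all A q π σ (T₀ + (i + 1))).edge i (by rw [hlen]; omega)
    rw [hfeq i (i + 1) (by omega), hfeq (i + 1) (i + 1) (by omega)]
    exact he
  have hfpic : ∀ n, f n ∉ A.p1 → f (n + 1) = π.1 ((List.range n).map f) (f n) := by
    intro n hn
    have hp := (inv_all A q π σ (T₀ + (n + 1))).pic n (by rw [hlen]; omega)
    rw [hfeq n (n + 1) (by omega)] at hn
    have h3 := hp hn
    have hlst : (Sst A q π σ (T₀ + (n + 1))).take n = (List.range n).map f := by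
      apply List.ext_getElem
      · rw [List.length_take, hlen]
        simp
        omega
      · intro k h1 h2
        have hk : k < n := by
          rw [List.length_take, hlen] at h1
          omega
        have hkl : k < (Sst A q π σ (T₀ + (n + 1))).length := by
          rw [hlen]; omega
        simp only [List.getElem_take, List.getElem_map, List.getElem_range]
        rw [hfeq k (n + 1) (by omega)]
        exact (List.getD_eq_getElem _ q hkl).symm
    rw [hfeq n (n + 1) (by omega), hfeq (n + 1) (n + 1) (by omega), h3, hlst]
  -- energy of the limit play
  have hpref : ∀ i, prefWeight A f i = pw A ((Sst A q π σ (T₀ + i)).take (i + 1)) := by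
    intro i
    induction i with
    | zero =>
      show (0:ℤ) = pw A ((Sst A q π σ (T₀ + 0)).take 1)
      rw [pw_take_one A _ (inv_all A q π σ (T₀ + 0)).ne]
    | succ i ih =>
      rw [prefW_succ, ih]
      have hlen1 : i + 1 < (Sst A q π σ (T₀ + (i + 1))).length := by rw [hlen]; omega
      have htk : (Sst A q π σ (T₀ + (i + 1))).take (i + 2) =
          (Sst A q π σ (T₀ + (i + 1))).take (i + 1) ++
            [(Sst A q π σ (T₀ + (i + 1))).getD (i + 1) q] :=
        take_succ_getD _ (i + 1) q hlen1
      have hne : (Sst A q π σ (T₀ + (i + 1))).take (i + 1) ≠ [] := by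
        have h5 : ((Sst A q π σ (T₀ + (i + 1))).take (i + 1)).length = i + 1 := by
          rw [List.length_take, hlen]; omega
        intro hcon
        rw [hcon] at h5
        simp at h5
      rw [htk, pw_append_singleton A q _ _ hne]
      have hlt : (Sst A q π σ (T₀ + (i + 1))).take (i + 1) =
          (Sst A q π σ (T₀ + i)).take (i + 1) :=
        hstabT i (i + 1) (by omega) (i + 1) (by omega)
      have hlast : ((Sst A q π σ (T₀ + (i + 1))).take (i + 1)).getD
          (((Sst A q π σ (T₀ + (i + 1))).take (i + 1)).length - 1) q = f i := by
        rw [List.length_take, min_eq_left (by rw [hlen]; omega)]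
        simp only [Nat.add_sub_cancel]
        rw [getD_take _ _ _ _ (by omega)]
        exact (hfeq i (i + 1) (by omega)).symm
      rw [hlast, hlt, ← hfeq (i + 1) (i + 1) (by omega)]
  have hEn : EnObj A (Fintype.card Q * W) f := by
    intro i
    have hb := pw_take_bound A W hW π q (Sst A q π σ (T₀ + i))
      (play A σ (ext A q π) q (T₀ + i))
      (inv_all A q π σ (T₀ + i)) i (by rw [hlen]; omega)
    rw [hpref i]
    push_cast
    omega
  -- fairness of the limit play
  have hfFair : FairPlay Ef f := by
    intro a b hab hinf N
    have hinfτ : ∀ N', ∃ i, N' ≤ i ∧ play A σ (ext A q π) q i = a := by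
      intro N'
      obtain ⟨i, hi, hia⟩ := hinf ((Sst A q π σ T₀).length - 1 + (N' + T₀))
      refine ⟨T₀ + (i - ((Sst A q π σ T₀).length - 1)), by omega, ?_⟩
      rw [← hftail (i - ((Sst A q π σ T₀).length - 1))]
      rw [show (Sst A q π σ T₀).length - 1 + (i - ((Sst A q π σ T₀).length - 1)) = i by omega]
      exact hia
    have hfairτ := hfair a b hab (fun N' => by
      obtain ⟨i, hi, hia⟩ := hinfτ N'
      exact ⟨i, hi, hia⟩)
    obtain ⟨i, hi, hia, hib⟩ := hfairτ (T₀ + N)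
    refine ⟨(Sst A q π σ T₀).length - 1 + (i - T₀), by omega, ?_, ?_⟩
    · rw [hftail (i - T₀), show T₀ + (i - T₀) = i by omega]
      exact hia
    · rw [show (Sst A q π σ T₀).length - 1 + (i - T₀) + 1 =
          (Sst A q π σ T₀).length - 1 + (i - T₀ + 1) by omega,
        hftail (i - T₀ + 1), show T₀ + (i - T₀ + 1) = i + 1 by omega]
      exact hib
  obtain ⟨σ', hσ'⟩ := play_copy A π q f hf0 hfedge hfpic
  have hplay : play A σ' π q = f := funext hσ'
  exact ⟨σ', by rw [hplay]; exact hEn, by rw [hplay]; exact hfFair⟩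

end Onefair2

/-- In a 1-fair energy game, if player 2 has a strategy that
defeats player 1 for the fixed initial credit `nW`, then `q ∈ Win₂`, i.e.
player 2 has a single strategy winning against every initial credit. -/
theorem onefair_energy_win2_from_nW
    (Q : Type) [Fintype Q] (A : Arena Q) (Ef : Q → Q → Prop)
    (hEf : ∀ a b, Ef a b → A.edge a b)
    (h1fair : ∀ a b, Ef a b → a ∈ A.p1)
    (W : ℕ)
    (hW : ∀ a b, A.edge a b → (A.w a b).natAbs ≤ W)
    (q : Q)
    (h : ∃ π : Strategy A, ∀ σ : Strategy A,
      ¬ (EnObj A (Fintype.card Q * W) (play A σ π q) ∧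
          FairPlay Ef (play A σ π q))) :
    Win2En1f A Ef q := by
  
  classical
  obtain ⟨π, hπ⟩ := h
  refine ⟨Onefair2.ext A q π, ?_⟩
  intro c σ
  rintro ⟨hEn, hFair⟩
  by_cases hc : ∀ T, ∃ t, T ≤ t ∧ Onefair2.cutp A q π σ t
  · exact Onefair2.caseA A q π σ hc c hEn
  · push_neg at hc
    obtain ⟨T₀, hT⟩ := hc
    have hnc : ∀ t, T₀ ≤ t → ¬ Onefair2.cutp A q π σ t := fun t ht => (hT t ht)
    obtain ⟨σ', hEn', hFair'⟩ := Onefair2.caseB A W hW Ef q π σ T₀ hnc hFair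
    exact hπ σ' ⟨hEn', hFair'⟩
end
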